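/- arXiv:1408.3895 — 7 statements merged into one kernel-verified Lean document; each statement's English description precedes it below -/
import Mathlib

section
/- For any partition λ of length b ≥ 1 and any weight i ≥ 1, (1 - q^i)·G^i_λ(q) = G^{i+1}_{λ̄}(q) − q^{i(λ₁+1)}·G^1_{λ̄}(q), where λ̄ denotes λ with its first (largest) part removed. -/
/-! Split `μ ⊆ λ` into its first part `m` and its tail `ν ⊆ λ̄`. For fixed `ν`, `m` runs over
the interval `[ν₁, λ₁]`, so the sum over `m` is a geometric series in `q^i` which `1 - q^i`
telescopes to `q^(i ν₁) - q^(i (λ₁ + 1))`. Absorbing `q^(i ν₁)` into the weight of `ν₁` turns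
the two resulting sums over `ν` into `G^(i+1)_{λ̄}` and `G^1_{λ̄}`. -/

open scoped Classical

/-- `Gw b i lam` is the generating function `G^i_λ(q)` for partitions `μ` contained in
the partition `λ = (lam 0, lam 1, …, lam (b-1))`, where the first part of `μ` is given
weight `i`: each `μ` contributes `q^(i·μ₁ + μ₂ + ⋯ + μ_b)`. -/
noncomputable def Gw (b i : ℕ) (lam : ℕ → ℕ) : Polynomial ℤ :=
  ∑ mu ∈ (Fintype.piFinset fun k : Fin b => Finset.range (lam k + 1)).filter
      (fun mu => ∀ j k : Fin b, j ≤ k → mu k ≤ mu j),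
    Polynomial.X ^ (∑ k : Fin b, (if (k : ℕ) = 0 then i else 1) * mu k)

open Finset Polynomial

lemma Fin.antitone_cons_iff {α : Type*} [Preorder α] {n : ℕ} {a : α} {f : Fin n → α} :
    Antitone (Fin.cons a f : Fin (n + 1) → α) ↔ (∀ i, f i ≤ a) ∧ Antitone f := by
  simpa only [antitone_iff_forall_lt, Relator.LiftFun, ge_iff_le] using
    Fin.liftFun_cons (· ≥ ·) (f := f) (a := a)

lemma one_sub_pow_mul_sum_Icc {R : Type*} [CommRing R] (x : R) (i : ℕ) {M L : ℕ}
    (h : M ≤ L + 1) :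
    (1 - x ^ i) * ∑ m ∈ Icc M L, x ^ (i * m) = x ^ (i * M) - x ^ (i * (L + 1)) := by
  simp_rw [← Ico_add_one_right_eq_Icc, pow_mul]
  rw [mul_comm, geom_sum_Ico_mul_neg _ h]

noncomputable def subpartitions (b : ℕ) (lam : ℕ → ℕ) : Finset (Fin b → ℕ) :=
  (Fintype.piFinset fun k : Fin b => Finset.range (lam k + 1)).filter
    (fun mu => ∀ j k : Fin b, j ≤ k → mu k ≤ mu j)

lemma mem_subpartitions {b : ℕ} {lam : ℕ → ℕ} {mu : Fin b → ℕ} :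
    mu ∈ subpartitions b lam ↔ (∀ k, mu k ≤ lam k) ∧ Antitone mu := by
  simp only [subpartitions, mem_filter, Fintype.mem_piFinset, mem_range, Nat.lt_succ_iff]
  rfl

lemma cons_mem_subpartitions {b : ℕ} {lam : ℕ → ℕ} {m : ℕ} {nu : Fin b → ℕ} :
    (Fin.cons m nu : Fin (b + 1) → ℕ) ∈ subpartitions (b + 1) lam ↔
      nu ∈ subpartitions b (fun k => lam (k + 1)) ∧ univ.sup nu ≤ m ∧ m ≤ lam 0 := by
  simp only [mem_subpartitions, Fin.antitone_cons_iff, Fin.forall_fin_succ, Fin.cons_zero,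
    Fin.cons_succ, Fin.val_zero, Fin.val_succ, Finset.sup_le_iff, mem_univ, true_implies]
  tauto

lemma Gw_eq_sum_subpartitions (b i : ℕ) (lam : ℕ → ℕ) :
    Gw b i lam = ∑ mu ∈ subpartitions b lam,
      X ^ (∑ k : Fin b, (if (k : ℕ) = 0 then i else 1) * mu k) :=
  rfl

lemma Gw_succ_length (b i : ℕ) (lam : ℕ → ℕ) :
    Gw (b + 1) i lam = ∑ nu ∈ subpartitions b (fun k => lam (k + 1)),
      ∑ m ∈ Icc (univ.sup nu) (lam 0), (X : ℤ[X]) ^ (i * m + ∑ k, nu k) := by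
  rw [Gw_eq_sum_subpartitions, sum_sigma']
  refine sum_nbij' (fun mu => ⟨Fin.tail mu, mu 0⟩) (fun p => Fin.cons p.2 p.1) ?_ ?_ ?_ ?_ ?_
  · intro mu hmu
    rw [← Fin.cons_self_tail mu, cons_mem_subpartitions] at hmu
    simpa [mem_sigma] using hmu
  · rintro ⟨nu, m⟩ hp
    simpa [cons_mem_subpartitions] using hp
  · intro mu _
    simp
  · rintro ⟨nu, m⟩ _
    simp
  · intro mu _
    simp [Fin.sum_univ_succ, Fin.tail]

lemma sum_weight_succ_eq {b : ℕ} (i : ℕ) {nu : Fin b → ℕ} (h : Antitone nu) :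
    ∑ k : Fin b, (if (k : ℕ) = 0 then i + 1 else 1) * nu k = i * univ.sup nu + ∑ k, nu k := by
  cases b with
  | zero => simp
  | succ b =>
    have hsup : univ.sup nu = nu 0 :=
      le_antisymm (Finset.sup_le fun k _ => h (Fin.zero_le k)) (le_sup (mem_univ 0))
    simp only [Fin.val_eq_zero_iff, ite_mul, add_mul, one_mul, Fin.sum_univ_succ, ↓reduceIte,
      Fin.succ_ne_zero, hsup]
    ring

lemma Gw_succ_weight (b i : ℕ) (lam : ℕ → ℕ) :
    Gw b (i + 1) lam =
      ∑ nu ∈ subpartitions b lam, (X : ℤ[X]) ^ (i * univ.sup nu + ∑ k, nu k) := by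
  rw [Gw_eq_sum_subpartitions]
  refine sum_congr rfl fun nu hnu => ?_
  rw [sum_weight_succ_eq i (mem_subpartitions.mp hnu).2]

theorem stmt1_general (b i : ℕ) (hb : 1 ≤ b) (lam : ℕ → ℕ)
    (hanti : ∀ j k, j ≤ k → k < b → lam k ≤ lam j) :
    (1 - Polynomial.X ^ i) * Gw b i lam
      = Gw (b - 1) (i + 1) (fun k => lam (k + 1))
        - Polynomial.X ^ (i * (lam 0 + 1)) * Gw (b - 1) 1 (fun k => lam (k + 1)) := by
  obtain ⟨b, rfl⟩ := Nat.exists_eq_add_of_le' hb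
  have hGw_one := Gw_succ_weight b 0 (fun k => lam (k + 1))
  simp only [zero_add, zero_mul] at hGw_one
  rw [Nat.add_sub_cancel, Gw_succ_length, Gw_succ_weight, hGw_one, mul_sum, mul_sum,
    ← sum_sub_distrib]
  refine sum_congr rfl fun nu hnu => ?_
  have hsup : univ.sup nu ≤ lam 0 := Finset.sup_le fun k _ =>
    ((mem_subpartitions.mp hnu).1 k).trans (hanti 0 (k + 1) (Nat.zero_le _) (by omega))
  simp_rw [pow_add, ← sum_mul, ← mul_assoc,
    one_sub_pow_mul_sum_Icc _ _ (hsup.trans (Nat.le_succ _)), sub_mul]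

/-- For a partition `λ` of length `b ≥ 1` and weight `i ≥ 1`,
`(1 - q^i)·G^i_λ(q) = G^(i+1)_{λ̄}(q) - q^(i(λ₁+1))·G^1_{λ̄}(q)`,
where `λ̄` is `λ` with its first (largest) part removed. -/
theorem stmt1 (b i : ℕ) (hb : 1 ≤ b) (hi : 1 ≤ i) (lam : ℕ → ℕ)
    (hanti : ∀ j k, j ≤ k → k < b → lam k ≤ lam j) :
    (1 - Polynomial.X ^ i) * Gw b i lam
      = Gw (b - 1) (i + 1) (fun k => lam (k + 1))
        - Polynomial.X ^ (i * (lam 0 + 1)) * Gw (b - 1) 1 (fun k => lam (k + 1)) :=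
  stmt1_general b i hb lam hanti
end

section
/- For any partition λ and any k ≥ 1 with k ≤ length(λ), the initial coefficients a₀, a₁, ..., a_{⌈kλ_k/2⌉} of G_λ(q) form a weakly increasing sequence. -/
open scoped Classical

/-- `subCount b lam n` is the number of partitions `μ ⊆ λ` of size `n`, where
`λ = (lam 0, …, lam (b-1))`. -/
noncomputable def subCount (b : ℕ) (lam : ℕ → ℕ) (n : ℕ) : ℕ :=
  ((Fintype.piFinset fun k : Fin b => Finset.range (lam k + 1)).filter
    (fun mu => (∀ j k : Fin b, j ≤ k → mu k ≤ mu j) ∧ (∑ k : Fin b, mu k) = n)).card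

namespace Stmt4Aux

open Finset Function

variable (a d : ℕ)

noncomputable def Eop (f : (Fin a → ℕ) → ℚ) : (Fin a → ℕ) → ℚ :=
  fun y => ∑ i : Fin a, if 1 ≤ y i ∧ y i ≤ d then f (Function.update y i (y i - 1)) else 0

noncomputable def Fop (f : (Fin a → ℕ) → ℚ) : (Fin a → ℕ) → ℚ :=
  fun y => ∑ i : Fin a, ((y i : ℚ) + 1) * ((d : ℚ) - (y i : ℚ)) * f (Function.update y i (y i + 1))

/-- box support -/
def BS (f : (Fin a → ℕ) → ℚ) : Prop := ∀ y, f y ≠ 0 → ∀ i, y i ≤ d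

lemma BS_Eop {f} (hf : BS a d f) : BS a d (Eop a d f) := by
  intro y hy i
  simp only [Eop] at hy
  obtain ⟨i₀, hi₀⟩ : ∃ i₀ : Fin a,
      (if 1 ≤ y i₀ ∧ y i₀ ≤ d then f (Function.update y i₀ (y i₀ - 1)) else 0) ≠ 0 := by
    by_contra h
    push_neg at h
    exact hy (Finset.sum_eq_zero fun i _ => h i)
  split_ifs at hi₀ with hg
  · rcases hg with ⟨h1, h2⟩
    have := hf _ hi₀ i
    by_cases hii : i = i₀
    · subst hii; exact h2
    · rwa [Function.update_of_ne hii] at this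
  · exact absurd rfl hi₀

lemma BS_Fop {f} (hf : BS a d f) : BS a d (Fop a d f) := by
  intro y hy i
  simp only [Fop] at hy
  obtain ⟨i₀, hi₀⟩ : ∃ i₀ : Fin a,
      ((y i₀ : ℚ) + 1) * ((d : ℚ) - (y i₀ : ℚ)) * f (Function.update y i₀ (y i₀ + 1)) ≠ 0 := by
    by_contra h
    push_neg at h
    exact hy (Finset.sum_eq_zero fun i _ => h i)
  have hfne : f (Function.update y i₀ (y i₀ + 1)) ≠ 0 := fun h => by simp [h] at hi₀
  have hbox := hf _ hfne i
  by_cases hii : i = i₀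
  · subst hii
    rw [Function.update_self] at hbox
    omega
  · rwa [Function.update_of_ne hii] at hbox

lemma Eop_eq_zero {f} (hf : BS a d f) {y} (hy : ¬ ∀ i, y i ≤ d) : Eop a d f y = 0 := by
  unfold Eop
  refine Finset.sum_eq_zero fun i _ => ?_
  split_ifs with hg
  · by_contra h
    refine hy fun l => ?_
    have := hf _ h l
    by_cases hli : l = i
    · subst hli; exact hg.2
    · rwa [Function.update_of_ne hli] at this
  · rfl

lemma Fop_eq_zero {f} (hf : BS a d f) {y} (hy : ¬ ∀ i, y i ≤ d) : Fop a d f y = 0 := by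
  unfold Fop
  refine Finset.sum_eq_zero fun i _ => ?_
  by_contra hne
  have hfne : f (Function.update y i (y i + 1)) ≠ 0 := fun h0 => hne (by rw [h0, mul_zero])
  refine hy fun l => ?_
  have := hf _ hfne l
  by_cases hli : l = i
  · subst hli
    rw [Function.update_self] at this
    omega
  · rwa [Function.update_of_ne hli] at this

noncomputable def tEF (f : (Fin a → ℕ) → ℚ) (y : Fin a → ℕ) (i j : Fin a) : ℚ :=
  if 1 ≤ y i ∧ y i ≤ d then
    (((update y i (y i - 1)) j : ℚ) + 1) * ((d:ℚ) - ((update y i (y i - 1)) j : ℚ)) *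
      f (update (update y i (y i - 1)) j ((update y i (y i - 1)) j + 1))
  else 0

noncomputable def tFE (f : (Fin a → ℕ) → ℚ) (y : Fin a → ℕ) (j i : Fin a) : ℚ :=
  ((y j : ℚ) + 1) * ((d:ℚ) - (y j : ℚ)) *
    (if 1 ≤ (update y j (y j + 1)) i ∧ (update y j (y j + 1)) i ≤ d then
      f (update (update y j (y j + 1)) i ((update y j (y j + 1)) i - 1)) else 0)

lemma Eop_Fop_eq (f y) : Eop a d (Fop a d f) y = ∑ i : Fin a, ∑ j : Fin a, tEF a d f y i j := by
  unfold Eop Fop tEF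
  refine Finset.sum_congr rfl fun i _ => ?_
  split_ifs with h
  · rfl
  · simp

lemma Fop_Eop_eq (f y) : Fop a d (Eop a d f) y = ∑ j : Fin a, ∑ i : Fin a, tFE a d f y j i := by
  unfold Eop Fop tFE
  refine Finset.sum_congr rfl fun j _ => ?_
  rw [Finset.mul_sum]

lemma key_offdiag (f y) (i j : Fin a) (hij : j ≠ i) :
    tEF a d f y i j = tFE a d f y j i := by
  unfold tEF tFE
  rw [update_of_ne hij, update_of_ne (Ne.symm hij)]
  rw [mul_ite, mul_zero]
  refine if_congr Iff.rfl ?_ rfl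
  congr 1
  rw [update_comm hij]

lemma key_diag (f y) (i : Fin a) (hbox : y i ≤ d) :
    tEF a d f y i i = tFE a d f y i i + (2*(y i:ℚ) - d) * f y := by
  unfold tEF tFE
  rw [update_self, update_self, update_idem, update_idem]
  rcases Nat.eq_zero_or_pos (y i) with h0 | h1
  · have hupd : update y i 0 = y := by rw [← h0]; exact update_eq_self i y
    rw [h0]
    simp only [Nat.one_le_iff_ne_zero, ne_eq, not_true_eq_false, false_and, if_false]
    by_cases hd : 1 ≤ d
    · rw [if_pos (by simpa using hd), Nat.add_sub_cancel, hupd]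
      push_cast
      ring
    · have hd0 : d = 0 := by omega
      rw [if_neg (by omega), hd0]
      push_cast
      ring
  · rw [if_pos ⟨h1, hbox⟩]
    have harg : y i - 1 + 1 = y i := by omega
    rw [harg, update_eq_self]
    have hcast : ((y i - 1 : ℕ) : ℚ) = (y i : ℚ) - 1 := by
      push_cast [h1]
      ring
    rw [hcast]
    by_cases h2 : y i + 1 ≤ d
    · rw [if_pos ⟨by omega, h2⟩, Nat.add_sub_cancel, update_eq_self]
      ring
    · rw [if_neg (by omega)]
      have hyd : ((y i : ℚ)) = d := by
        have : y i = d := by omega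
        rw [this]
      rw [hyd]
      ring

lemma comm (f : (Fin a → ℕ) → ℚ) (hf : BS a d f) (y : Fin a → ℕ) :
    Eop a d (Fop a d f) y
      = Fop a d (Eop a d f) y + (2*(∑ i : Fin a, (y i:ℚ)) - a*d) * f y := by
  by_cases hbox : ∀ i, y i ≤ d
  · rw [Eop_Fop_eq, Fop_Eop_eq]
    have key : ∀ i j : Fin a, tEF a d f y i j
        = tFE a d f y j i + (if j = i then (2*(y i:ℚ) - d) * f y else 0) := by
      intro i j
      by_cases hij : j = i
      · subst hij; rw [if_pos rfl]; exact key_diag a d f y j (hbox j)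
      · rw [if_neg hij, add_zero]; exact key_offdiag a d f y i j hij
    have inner : ∀ i : Fin a, ∑ j : Fin a, tEF a d f y i j
        = (∑ j : Fin a, tFE a d f y j i) + (2*(y i:ℚ) - d) * f y := by
      intro i
      rw [Finset.sum_congr rfl fun j _ => key i j, Finset.sum_add_distrib]
      congr 1
      simp
    rw [Finset.sum_congr rfl fun i _ => inner i, Finset.sum_add_distrib]
    rw [Finset.sum_comm]
    congr 1
    rw [← Finset.sum_mul]
    congr 1
    rw [Finset.sum_sub_distrib, ← Finset.mul_sum]
    simp [Finset.card_univ, mul_comm]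
  · rw [Eop_eq_zero a d (BS_Fop a d hf) hbox, Fop_eq_zero a d (BS_Eop a d hf) hbox]
    have hfy : f y = 0 := by
      by_contra h
      exact hbox (hf y h)
    rw [hfy]
    ring


/-- support on box & on the weight stratum `n - j`. -/
def Good (j n : ℕ) (f : (Fin a → ℕ) → ℚ) : Prop :=
  ∀ y, f y ≠ 0 → (∀ i, y i ≤ d) ∧ (∑ i : Fin a, y i) + j = n

lemma Good.bs {j n f} (h : Good a d j n f) : BS a d f := fun y hy => (h y hy).1

lemma sum_update_add (y : Fin a → ℕ) (i : Fin a) (v : ℕ) :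
    (∑ l, Function.update y i v l) + y i = (∑ l, y l) + v := by
  rw [Finset.sum_update_of_mem (Finset.mem_univ i)]
  rw [← Finset.add_sum_erase _ y (Finset.mem_univ i), Finset.sdiff_singleton_eq_erase]
  ring

lemma Good_Fop {j n f} (h : Good a d j n f) : Good a d (j+1) n (Fop a d f) := by
  intro y hy
  simp only [Fop] at hy
  obtain ⟨i, hi⟩ : ∃ i : Fin a,
      ((y i : ℚ) + 1) * ((d : ℚ) - (y i : ℚ)) * f (Function.update y i (y i + 1)) ≠ 0 := by
    by_contra hc; push_neg at hc
    exact hy (Finset.sum_eq_zero fun i _ => hc i)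
  have hfne : f (Function.update y i (y i + 1)) ≠ 0 := fun h0 => hi (by rw [h0, mul_zero])
  obtain ⟨hbox, hsum⟩ := h _ hfne
  have hsum2 := sum_update_add a y i (y i + 1)
  constructor
  · intro l
    have := hbox l
    by_cases hli : l = i
    · subst hli; rw [Function.update_self] at this; omega
    · rwa [Function.update_of_ne hli] at this
  · omega

lemma Good_Eop {j n f} (h : Good a d j n f) : Good a d j (n+1) (Eop a d f) := by
  intro y hy
  simp only [Eop] at hy
  obtain ⟨i, hi⟩ : ∃ i : Fin a,
      (if 1 ≤ y i ∧ y i ≤ d then f (Function.update y i (y i - 1)) else 0) ≠ 0 := by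
    by_contra hc; push_neg at hc
    exact hy (Finset.sum_eq_zero fun i _ => hc i)
  split_ifs at hi with hg
  · obtain ⟨hbox, hsum⟩ := h _ hi
    have hsum2 := sum_update_add a y i (y i - 1)
    constructor
    · intro l
      have := hbox l
      by_cases hli : l = i
      · subst hli; exact hg.2
      · rwa [Function.update_of_ne hli] at this
    · omega
  · exact absurd rfl hi

lemma Eop_zero : Eop a d 0 = 0 := by
  funext y; simp [Eop]

lemma Eop_smul (c : ℚ) (f) : Eop a d (c • f) = c • Eop a d f := by
  funext y
  simp only [Eop, Pi.smul_apply, smul_eq_mul, Finset.mul_sum]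
  refine Finset.sum_congr rfl fun i _ => ?_
  split_ifs <;> simp

lemma Fop_smul (c : ℚ) (f) : Fop a d (c • f) = c • Fop a d f := by
  funext y
  simp only [Fop, Pi.smul_apply, smul_eq_mul, Finset.mul_sum]
  refine Finset.sum_congr rfl fun i _ => ?_
  ring

lemma core (n : ℕ) (h2 : 2*n < a*d) (v : (Fin a → ℕ) → ℚ)
    (hv : Good a d 0 n v) (hEv : Eop a d v = 0) : v = 0 := by
  set h : ℚ := 2*(n:ℚ) - (a:ℚ)*(d:ℚ) with hh
  have hneg : h < 0 := by
    have : (2*n : ℚ) < (a*d : ℚ) := by exact_mod_cast h2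
    push_cast at this ⊢
    linarith
  have goodF : ∀ j, Good a d j n ((Fop a d)^[j] v) := by
    intro j
    induction j with
    | zero => simpa using hv
    | succ j ih =>
        rw [Function.iterate_succ_apply']
        exact Good_Fop a d ih
  -- `Heigen` : the pointwise H-action on the j-th layer
  have keyE : ∀ j : ℕ, Eop a d ((Fop a d)^[j+1] v)
      = (((j:ℚ)+1) * (h - j)) • ((Fop a d)^[j] v) := by
    intro j
    induction j with
    | zero =>
        funext y
        rw [Function.iterate_succ_apply', Function.iterate_zero_apply]
        rw [comm a d v hv.bs y, hEv]
        have hF0 : Fop a d 0 = 0 := by funext z; simp [Fop]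
        rw [hF0]
        simp only [Pi.zero_apply, Pi.smul_apply, smul_eq_mul, zero_add]
        by_cases hvy : v y = 0
        · rw [hvy]; ring
        · obtain ⟨_, hs⟩ := hv y hvy
          have : (∑ i : Fin a, (y i : ℚ)) = (n : ℚ) := by
            rw [← Nat.cast_sum]
            exact_mod_cast congrArg (Nat.cast : ℕ → ℚ) (by omega : (∑ i : Fin a, y i) = n)
          rw [this]
          push_cast
          ring
    | succ j ih =>
        funext y
        have hbsj : BS a d ((Fop a d)^[j+1] v) := (goodF (j+1)).bs
        rw [Function.iterate_succ_apply' (Fop a d) (j+1) v]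
        rw [comm a d _ hbsj y, ih]
        rw [Fop_smul]
        rw [← Function.iterate_succ_apply' (Fop a d) j v]
        simp only [Pi.smul_apply, smul_eq_mul]
        by_cases hy0 : (Fop a d)^[j+1] v y = 0
        · rw [hy0]; ring
        · obtain ⟨_, hs⟩ := goodF (j+1) y hy0
          have hcast : (∑ i : Fin a, (y i : ℚ)) = (n : ℚ) - ((j:ℚ)+1) := by
            rw [← Nat.cast_sum]
            have : ((∑ i : Fin a, y i : ℕ) : ℚ) + ((j:ℚ)+1) = (n:ℚ) := by exact_mod_cast hs
            linarith
          rw [hcast, hh]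
          push_cast
          ring
  have hzero : (Fop a d)^[n+1] v = 0 := by
    funext y
    by_contra hy0
    obtain ⟨_, hs⟩ := goodF (n+1) y hy0
    omega
  have final : ∀ j, (Fop a d)^[j] v = 0 → v = 0 := by
    intro j
    induction j with
    | zero => exact fun h0 => h0
    | succ j ih =>
        intro h0
        have hk := keyE j
        rw [h0, Eop_zero] at hk
        have hc : (((j:ℚ)+1) * (h - j)) ≠ 0 := by
          have h1 : ((j:ℚ)+1) ≠ 0 := by positivity
          have h2 : h - (j:ℚ) < 0 := by
            have : (0:ℚ) ≤ (j:ℚ) := Nat.cast_nonneg j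
            linarith
          exact mul_ne_zero h1 (ne_of_lt h2)
        have := (smul_eq_zero.mp hk.symm).resolve_left hc
        exact ih this
  exact final (n+1) hzero


/-- monotone (weakly increasing) tuples in the box with given sum -/
noncomputable def PM (n : ℕ) : Finset (Fin a → ℕ) :=
  (Fintype.piFinset fun _ : Fin a => Finset.range (d+1)).filter
    (fun x => Monotone x ∧ ∑ i, x i = n)

lemma mem_PM {n : ℕ} {x : Fin a → ℕ} :
    x ∈ PM a d n ↔ (∀ i, x i ≤ d) ∧ Monotone x ∧ ∑ i, x i = n := by
  simp [PM, Fintype.mem_piFinset, Nat.lt_succ_iff]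

noncomputable def sortf (y : Fin a → ℕ) : Fin a → ℕ := y ∘ Tuple.sort y

lemma sortf_mem {n : ℕ} {y : Fin a → ℕ} (hbox : ∀ i, y i ≤ d) (hsum : ∑ i, y i = n) :
    sortf a y ∈ PM a d n := by
  rw [mem_PM]
  refine ⟨fun i => hbox _, Tuple.monotone_sort y, ?_⟩
  rw [sortf, ← hsum]
  exact Equiv.sum_comp (Tuple.sort y) y

lemma sortf_comp_perm (y : Fin a → ℕ) (σ : Equiv.Perm (Fin a)) :
    sortf a (y ∘ σ) = sortf a y :=
  Tuple.comp_perm_comp_sort_eq_comp_sort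

lemma sortf_of_monotone {y : Fin a → ℕ} (hy : Monotone y) : sortf a y = y := by
  rw [sortf, Tuple.sort_eq_refl_iff_monotone.mpr hy]
  rfl

variable (n : ℕ)

noncomputable def Phi (g : {x // x ∈ PM a d n} → ℚ) : (Fin a → ℕ) → ℚ :=
  fun y => if h : (∀ i, y i ≤ d) ∧ ∑ i, y i = n then
    g ⟨sortf a y, sortf_mem a d h.1 h.2⟩ else 0

lemma Phi_good (g) : Good a d 0 n (Phi a d n g) := by
  intro y hy
  rw [Phi] at hy
  split_ifs at hy with h
  · exact ⟨h.1, by omega⟩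
  · exact absurd rfl hy

lemma Phi_symm (g) (y : Fin a → ℕ) (σ : Equiv.Perm (Fin a)) :
    Phi a d n g (y ∘ σ) = Phi a d n g y := by
  have hbox : (∀ i, (y ∘ σ) i ≤ d) ↔ (∀ i, y i ≤ d) := σ.forall_congr (by simp)
  have hsum : ∑ i, (y ∘ σ) i = ∑ i, y i := Equiv.sum_comp σ y
  rw [Phi, Phi]
  by_cases h : (∀ i, y i ≤ d) ∧ ∑ i, y i = n
  · rw [dif_pos (by rw [hbox, hsum]; exact h), dif_pos h]
    congr 1
    exact Subtype.ext (sortf_comp_perm a y σ)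
  · rw [dif_neg (by rw [hbox, hsum]; exact h), dif_neg h]

lemma Eop_symm (f : (Fin a → ℕ) → ℚ) (hf : ∀ (y : Fin a → ℕ) (σ : Equiv.Perm (Fin a)), f (y ∘ σ) = f y)
    (y : Fin a → ℕ) (σ : Equiv.Perm (Fin a)) :
    Eop a d f (y ∘ σ) = Eop a d f y := by
  rw [Eop, Eop]
  rw [← Equiv.sum_comp σ (fun i => if 1 ≤ y i ∧ y i ≤ d then f (Function.update y i (y i - 1)) else 0)]
  refine Finset.sum_congr rfl fun i _ => ?_
  simp only [Function.comp_apply]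
  have harg : Function.update (y ∘ σ) i (y (σ i) - 1)
      = Function.update y (σ i) (y (σ i) - 1) ∘ σ := by
    funext l
    by_cases hl : l = i
    · subst hl
      simp [Function.update_self]
    · rw [Function.update_of_ne hl]
      have hne : σ l ≠ σ i := fun hc => hl (σ.injective hc)
      simp [Function.update_of_ne hne, Function.comp_apply]
  rw [harg, hf _ σ]

lemma Phi_at_mem (g) (x : Fin a → ℕ) (hx : x ∈ PM a d n) :
    Phi a d n g x = g ⟨x, hx⟩ := by
  obtain ⟨hbox, hmono, hsum⟩ := (mem_PM a d).mp hx
  rw [Phi, dif_pos ⟨hbox, hsum⟩]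
  congr 1
  exact Subtype.ext (sortf_of_monotone a hmono)

noncomputable def psi (g : {x // x ∈ PM a d n} → ℚ) : {x // x ∈ PM a d (n+1)} → ℚ :=
  fun mu => Eop a d (Phi a d n g) mu.1

lemma psi_factor (g) : Phi a d (n+1) (psi a d n g) = Eop a d (Phi a d n g) := by
  funext y
  rw [Phi]
  by_cases h : (∀ i, y i ≤ d) ∧ ∑ i, y i = n + 1
  · rw [dif_pos h]
    show Eop a d (Phi a d n g) (sortf a y) = _
    rw [sortf]
    exact Eop_symm a d _ (fun z σ => Phi_symm a d n g z σ) y (Tuple.sort y)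
  · rw [dif_neg h]
    by_cases hbox : ∀ i, y i ≤ d
    · by_contra hne
      have := Good_Eop a d (Phi_good a d n g) y (Ne.symm hne)
      exact h ⟨hbox, by omega⟩
    · exact (Eop_eq_zero a d (Phi_good a d n g).bs hbox).symm

lemma Phi_add (g g') : Phi a d n (g + g') = Phi a d n g + Phi a d n g' := by
  funext y
  simp only [Phi, Pi.add_apply]
  split_ifs <;> simp

lemma Phi_smul (c : ℚ) (g) : Phi a d n (c • g) = c • Phi a d n g := by
  funext y
  simp only [Phi, Pi.smul_apply, smul_eq_mul]
  split_ifs <;> simp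

lemma Phi_zero : Phi a d n 0 = 0 := by
  funext y
  simp only [Phi, Pi.zero_apply]
  split_ifs <;> rfl

lemma Eop_add (f f') : Eop a d (f + f') = Eop a d f + Eop a d f' := by
  funext y
  simp only [Eop, Pi.add_apply, ← Finset.sum_add_distrib]
  refine Finset.sum_congr rfl fun i _ => ?_
  split_ifs <;> simp

lemma Eop_smul' (c : ℚ) (f) : Eop a d (c • f) = c • Eop a d f := by
  funext y
  simp only [Eop, Pi.smul_apply, smul_eq_mul, Finset.mul_sum]
  refine Finset.sum_congr rfl fun i _ => ?_
  split_ifs <;> simp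

noncomputable def psiL : ({x // x ∈ PM a d n} → ℚ) →ₗ[ℚ] ({x // x ∈ PM a d (n+1)} → ℚ) where
  toFun := psi a d n
  map_add' g g' := by
    funext mu
    simp only [psi, Phi_add, Eop_add, Pi.add_apply]
  map_smul' c g := by
    funext mu
    simp only [psi, Phi_smul, Eop_smul', Pi.smul_apply, RingHom.id_apply, smul_eq_mul]

lemma psiL_injective (h2 : 2*n < a*d) : Function.Injective (psiL a d n) := by
  rw [← LinearMap.ker_eq_bot, LinearMap.ker_eq_bot']
  intro g hg
  have h0 : Eop a d (Phi a d n g) = 0 := by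
    rw [← psi_factor a d n g]
    show Phi a d (n+1) (psiL a d n g) = 0
    rw [hg, Phi_zero]
  have hPhi0 : Phi a d n g = 0 := core a d n h2 _ (Phi_good a d n g) h0
  funext x
  have := congrFun hPhi0 x.1
  rw [Phi_at_mem a d n g x.1 x.2] at this
  simpa using this

lemma PM_card_le (h2 : 2*n < a*d) : (PM a d n).card ≤ (PM a d (n+1)).card := by
  have h := LinearMap.finrank_le_finrank_of_injective (psiL_injective a d n h2)
  rwa [Module.finrank_fintype_fun_eq_card, Module.finrank_fintype_fun_eq_card,
    Fintype.card_coe, Fintype.card_coe] at h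


/-- decreasing tuples in box with sum j -/
noncomputable def PD (a d j : ℕ) : Finset (Fin a → ℕ) :=
  (Fintype.piFinset fun _ : Fin a => Finset.range (d+1)).filter
    (fun x => (∀ i l : Fin a, i ≤ l → x l ≤ x i) ∧ ∑ i, x i = j)

lemma mem_PD {a d j : ℕ} {x : Fin a → ℕ} :
    x ∈ PD a d j ↔ (∀ i, x i ≤ d) ∧ (∀ i l : Fin a, i ≤ l → x l ≤ x i) ∧ ∑ i, x i = j := by
  simp [PD, Fintype.mem_piFinset, Nat.lt_succ_iff]

lemma mem_PM' {a d n : ℕ} {x : Fin a → ℕ} :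
    x ∈ PM a d n ↔ (∀ i, x i ≤ d) ∧ Monotone x ∧ ∑ i, x i = n := by
  simp [PM, Fintype.mem_piFinset, Nat.lt_succ_iff]

lemma PD_card_eq (a d j : ℕ) : (PD a d j).card = (PM a d j).card := by
  refine Finset.card_bij' (fun x _ => x ∘ Fin.rev) (fun y _ => y ∘ Fin.rev) ?_ ?_ ?_ ?_
  · intro x hx
    obtain ⟨hbox, hanti, hsum⟩ := mem_PD.mp hx
    refine mem_PM'.mpr ⟨fun i => hbox _, ?_, ?_⟩
    · intro i l hil
      exact hanti _ _ (Fin.rev_le_rev.mpr hil)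
    · show ∑ i : Fin a, x (Fin.rev i) = j
      exact (Fintype.sum_equiv (Fin.revPerm) _ _ (fun i => rfl)).trans hsum
  · intro y hy
    obtain ⟨hbox, hmono, hsum⟩ := mem_PM'.mp hy
    refine mem_PD.mpr ⟨fun i => hbox _, ?_, ?_⟩
    · intro i l hil
      exact hmono (Fin.rev_le_rev.mpr hil)
    · show ∑ i : Fin a, y (Fin.rev i) = j
      exact (Fintype.sum_equiv (Fin.revPerm) _ _ (fun i => rfl)).trans hsum
  · intro x _
    funext i
    simp [Function.comp_apply, Fin.rev_rev]
  · intro y _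
    funext i
    simp [Function.comp_apply, Fin.rev_rev]

lemma PD_card_le (a d j : ℕ) (h2 : 2*j < a*d) : (PD a d j).card ≤ (PD a d (j+1)).card := by
  rw [PD_card_eq, PD_card_eq]
  exact PM_card_le a d j h2

lemma exists_injOn {α : Type*} [DecidableEq α] (s t : Finset α) (h : s.card ≤ t.card) :
    ∃ f : α → α, Set.InjOn f s ∧ ∀ x ∈ s, f x ∈ t := by
  classical
  let e := s.equivFin
  let e' := t.equivFin
  have hle : s.card ≤ t.card := h
  refine ⟨fun x => if hx : x ∈ s then
      (e'.symm (Fin.castLE hle (e ⟨x, hx⟩))).1 else x, ?_, ?_⟩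
  · intro x hx y hy hxy
    have hx' : x ∈ s := hx
    have hy' : y ∈ s := hy
    dsimp only at hxy
    rw [dif_pos hx', dif_pos hy'] at hxy
    have h1 := e'.symm.injective (Subtype.ext hxy)
    have h2 := Fin.castLE_injective hle h1
    have h3 := e.injective h2
    exact congrArg Subtype.val h3
  · intro x hx
    dsimp only
    rw [dif_pos hx]
    exact (e'.symm _).2

/-- a fixed family of injections on decreasing box partitions -/
noncomputable def boxInj (a d j : ℕ) : (Fin a → ℕ) → (Fin a → ℕ) :=
  if h : 2*j < a*d then
    Classical.choose (exists_injOn (PD a d j) (PD a d (j+1)) (PD_card_le a d j h))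
  else id

lemma boxInj_spec (a d j : ℕ) (h : 2*j < a*d) :
    Set.InjOn (boxInj a d j) (PD a d j) ∧ ∀ x ∈ PD a d j, boxInj a d j x ∈ PD a d (j+1) := by
  rw [boxInj, dif_pos h]
  exact Classical.choose_spec (exists_injOn (PD a d j) (PD a d (j+1)) (PD_card_le a d j h))


/-- the finset of partitions under `lam` with `b` parts and sum `n` -/
noncomputable def S (b : ℕ) (lam : ℕ → ℕ) (n : ℕ) : Finset (Fin b → ℕ) :=
  ((Fintype.piFinset fun k : Fin b => Finset.range (lam k + 1)).filter
    (fun mu => (∀ j k : Fin b, j ≤ k → mu k ≤ mu j) ∧ (∑ k : Fin b, mu k) = n))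

lemma mem_S {b : ℕ} {lam : ℕ → ℕ} {n : ℕ} {x : Fin b → ℕ} :
    x ∈ S b lam n ↔ (∀ i : Fin b, x i ≤ lam i) ∧
      (∀ i j : Fin b, i ≤ j → x j ≤ x i) ∧ ∑ i, x i = n := by
  simp [S, Fintype.mem_piFinset, Nat.lt_succ_iff]

/-- number of rows among the first `k` exceeding `lam (k-1)` -/
noncomputable def sOf (b k : ℕ) (lam : ℕ → ℕ) (μ : Fin b → ℕ) : ℕ :=
  #(Finset.univ.filter fun i : Fin b => (i:ℕ) < k ∧ lam (k-1) < μ i)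

noncomputable def cOf (b k : ℕ) (μ : Fin b → ℕ) : ℕ :=
  if h : k < b then μ ⟨k, h⟩ else 0

noncomputable def del (b k : ℕ) (hkb : k ≤ b) (s c : ℕ) (μ : Fin b → ℕ) :
    Fin (k - s) → ℕ :=
  fun t => μ ⟨s + t.1, by have := t.isLt; omega⟩ - c

noncomputable def phiExp (b k : ℕ) (hkb : k ≤ b) (lam : ℕ → ℕ) (s c : ℕ)
    (μ : Fin b → ℕ) : Fin b → ℕ :=
  fun i => if h : (i:ℕ) < s ∨ k ≤ (i:ℕ) then μ i
    else boxInj (k - s) (lam (k-1) - c) (∑ t, del b k hkb s c μ t) (del b k hkb s c μ)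
          ⟨(i:ℕ) - s, by have := i.isLt; omega⟩ + c

noncomputable def phi (b k : ℕ) (hkb : k ≤ b) (lam : ℕ → ℕ) (μ : Fin b → ℕ) : Fin b → ℕ :=
  phiExp b k hkb lam (sOf b k lam μ) (cOf b k μ) μ

section

variable {b k : ℕ} {lam : ℕ → ℕ} {μ : Fin b → ℕ}

lemma sOf_le (hkb : k ≤ b) : sOf b k lam μ ≤ k := by
  classical
  have : (Finset.univ.filter fun i : Fin b => (i:ℕ) < k ∧ lam (k-1) < μ i)
      ⊆ Finset.univ.filter fun i : Fin b => (i:ℕ) < k := by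
    intro i hi
    simp only [Finset.mem_filter, Finset.mem_univ, true_and] at hi ⊢
    exact hi.1
  have h2 := Finset.card_le_card this
  have h3 : #(Finset.univ.filter fun i : Fin b => (i:ℕ) < k) ≤ k := by
    have h4 := Finset.card_le_card_of_injOn (fun i : Fin b => (i:ℕ))
      (s := Finset.univ.filter fun i : Fin b => (i:ℕ) < k) (t := Finset.range k)
      (fun i hi => by
        have hi' : (i:ℕ) < k := (Finset.mem_filter.mp hi).2
        exact Finset.mem_range.mpr hi')
      (fun x _ y _ h => Fin.ext h)
    simpa using h4
  exact le_trans h2 h3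

lemma region (hmono : ∀ i j : Fin b, i ≤ j → μ j ≤ μ i) (i : Fin b) (hik : (i:ℕ) < k) :
    ((i:ℕ) < sOf b k lam μ ↔ lam (k-1) < μ i) := by
  classical
  set T := (Finset.univ.filter fun i : Fin b => (i:ℕ) < k ∧ lam (k-1) < μ i) with hT
  have hdown : ∀ i j : Fin b, i ≤ j → j ∈ T → i ∈ T := by
    intro i j hij hj
    simp only [hT, Finset.mem_filter, Finset.mem_univ, true_and] at hj ⊢
    have h1 : (i:ℕ) ≤ (j:ℕ) := hij
    exact ⟨by omega, lt_of_lt_of_le hj.2 (hmono i j hij)⟩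
  have hiT : i ∈ T ↔ lam (k-1) < μ i := by
    simp only [hT, Finset.mem_filter, Finset.mem_univ, true_and]
    exact ⟨fun h => h.2, fun h => ⟨hik, h⟩⟩
  rw [← hiT]
  constructor
  · intro hlt
    by_contra hiT'
    have hsub : T ⊆ Finset.Iio i := by
      intro j hj
      rw [Finset.mem_Iio]
      by_contra hji
      push_neg at hji
      exact hiT' (hdown i j hji hj)
    have := Finset.card_le_card hsub
    rw [Fin.card_Iio] at this
    change (i:ℕ) < #T at hlt
    omega
  · intro hiT'
    have hsub : Finset.Iic i ⊆ T := fun j hj => hdown j i (Finset.mem_Iic.mp hj) hiT'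
    have := Finset.card_le_card hsub
    rw [Fin.card_Iic] at this
    change (i:ℕ) < #T
    omega

lemma sum_split (hkb : k ≤ b) (s : ℕ) (hs : s ≤ k) (x : Fin b → ℕ) :
    ∑ i, x i = (∑ i ∈ Finset.univ.filter (fun i : Fin b => (i:ℕ) < s ∨ k ≤ (i:ℕ)), x i)
      + ∑ t : Fin (k - s), x ⟨s + t.1, by have := t.isLt; omega⟩ := by
  classical
  rw [← Finset.sum_filter_add_sum_filter_not Finset.univ
    (fun i : Fin b => (i:ℕ) < s ∨ k ≤ (i:ℕ)) x]
  congr 1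
  refine Finset.sum_bij' (fun i hi => (⟨(i:ℕ) - s, ?_⟩ : Fin (k - s)))
    (fun t _ => (⟨s + t.1, ?_⟩ : Fin b)) ?_ ?_ ?_ ?_ ?_
  · simp only [Finset.mem_filter, Finset.mem_univ, true_and, not_or, not_lt, not_le] at hi
    omega
  · have := t.isLt; omega
  · intro i hi
    exact Finset.mem_univ _
  · intro t ht
    simp only [Finset.mem_filter, Finset.mem_univ, true_and, not_or, not_lt, not_le]
    have := t.isLt
    omega
  · intro i hi
    simp only [Finset.mem_filter, Finset.mem_univ, true_and, not_or, not_lt, not_le] at hi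
    ext
    simp only
    omega
  · intro t ht
    ext
    simp only
    omega
  · intro i hi
    simp only [Finset.mem_filter, Finset.mem_univ, true_and, not_or, not_lt, not_le] at hi
    congr 1
    ext
    simp only
    omega


variable {n : ℕ}

lemma cOf_le_w (hk : 1 ≤ k) (hkb : k ≤ b)
    (hanti : ∀ i j, i ≤ j → j < b → lam j ≤ lam i)
    (hbounds : ∀ i : Fin b, μ i ≤ lam i) : cOf b k μ ≤ lam (k-1) := by
  rw [cOf]
  split_ifs with h
  · exact le_trans (hbounds ⟨k,h⟩) (hanti (k-1) k (by omega) h)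
  · exact Nat.zero_le _

lemma cOf_le_mu (hkb : k ≤ b) (hmono : ∀ i j : Fin b, i ≤ j → μ j ≤ μ i)
    (i : Fin b) (hik : (i:ℕ) < k) : cOf b k μ ≤ μ i := by
  rw [cOf]
  split_ifs with h
  · exact hmono i ⟨k,h⟩ (by rw [Fin.le_def]; exact le_of_lt hik)
  · exact Nat.zero_le _

lemma del_PD (hkb : k ≤ b) (hmono : ∀ i j : Fin b, i ≤ j → μ j ≤ μ i) :
    del b k hkb (sOf b k lam μ) (cOf b k μ) μ
      ∈ PD (k - sOf b k lam μ) (lam (k-1) - cOf b k μ)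
          (∑ t, del b k hkb (sOf b k lam μ) (cOf b k μ) μ t) := by
  rw [mem_PD]
  refine ⟨?_, ?_, rfl⟩
  · intro t
    have htk : sOf b k lam μ + t.1 < k := by have := t.isLt; omega
    have hle : μ ⟨sOf b k lam μ + t.1, by omega⟩ ≤ lam (k-1) := by
      by_contra hgt
      push_neg at hgt
      have := (region hmono ⟨sOf b k lam μ + t.1, by omega⟩ htk).mpr hgt
      simp only at this
      omega
    exact tsub_le_tsub_right hle _
  · intro t u htu
    have h1 : (t:ℕ) ≤ (u:ℕ) := htu
    have : μ ⟨sOf b k lam μ + u.1, by have := u.isLt; omega⟩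
        ≤ μ ⟨sOf b k lam μ + t.1, by have := t.isLt; omega⟩ := by
      apply hmono
      rw [Fin.le_def]
      simp only
      omega
    exact tsub_le_tsub_right this _

lemma n_decomp (hkb : k ≤ b) (hmono : ∀ i j : Fin b, i ≤ j → μ j ≤ μ i)
    (hsum : ∑ i, μ i = n) :
    n = (∑ i ∈ Finset.univ.filter (fun i : Fin b => (i:ℕ) < sOf b k lam μ ∨ k ≤ (i:ℕ)), μ i)
      + (∑ t, del b k hkb (sOf b k lam μ) (cOf b k μ) μ t)
      + (k - sOf b k lam μ) * cOf b k μ := by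
  have hs := sOf_le (lam := lam) (μ := μ) hkb
  rw [← hsum, sum_split hkb (sOf b k lam μ) hs μ]
  have hval : ∀ t : Fin (k - sOf b k lam μ),
      μ ⟨sOf b k lam μ + t.1, by have := t.isLt; omega⟩
        = del b k hkb (sOf b k lam μ) (cOf b k μ) μ t + cOf b k μ := by
    intro t
    rw [del]
    have hik : sOf b k lam μ + t.1 < k := by have := t.isLt; omega
    have := cOf_le_mu hkb hmono ⟨sOf b k lam μ + t.1, by omega⟩ hik
    omega
  rw [Finset.sum_congr rfl (fun t _ => hval t), Finset.sum_add_distrib,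
    Finset.sum_const, Finset.card_univ, Fintype.card_fin, smul_eq_mul]
  ring

lemma Jbound (hk : 1 ≤ k) (hkb : k ≤ b)
    (hanti : ∀ i j, i ≤ j → j < b → lam j ≤ lam i)
    (hμ : μ ∈ S b lam n) (hn : 2*n+1 ≤ k * lam (k-1)) :
    2 * (∑ t, del b k hkb (sOf b k lam μ) (cOf b k μ) μ t)
      < (k - sOf b k lam μ) * (lam (k-1) - cOf b k μ) := by
  obtain ⟨hbounds, hmono, hsum⟩ := mem_S.mp hμ
  have hs := sOf_le (lam := lam) (μ := μ) hkb
  have hcw := cOf_le_w hk hkb hanti hbounds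
  have hdec := n_decomp (lam := lam) hkb hmono hsum
  have houtge : sOf b k lam μ * lam (k-1)
      ≤ ∑ i ∈ Finset.univ.filter (fun i : Fin b => (i:ℕ) < sOf b k lam μ ∨ k ≤ (i:ℕ)), μ i := by
    have hsub : (Finset.univ.filter fun i : Fin b => (i:ℕ) < k ∧ lam (k-1) < μ i)
        ⊆ Finset.univ.filter (fun i : Fin b => (i:ℕ) < sOf b k lam μ ∨ k ≤ (i:ℕ)) := by
      intro i hi
      simp only [Finset.mem_filter, Finset.mem_univ, true_and] at hi ⊢
      exact Or.inl ((region hmono i hi.1).mpr hi.2)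
    calc sOf b k lam μ * lam (k-1)
        = #(Finset.univ.filter fun i : Fin b => (i:ℕ) < k ∧ lam (k-1) < μ i) • lam (k-1) := by
          rw [sOf, smul_eq_mul]
      _ ≤ ∑ i ∈ (Finset.univ.filter fun i : Fin b => (i:ℕ) < k ∧ lam (k-1) < μ i), μ i := by
          apply Finset.card_nsmul_le_sum
          intro i hi
          simp only [Finset.mem_filter, Finset.mem_univ, true_and] at hi
          omega
      _ ≤ _ := Finset.sum_le_sum_of_subset hsub
  have e1 : k * lam (k-1) = sOf b k lam μ * lam (k-1) + (k - sOf b k lam μ) * lam (k-1) := by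
    rw [← Nat.add_mul]
    congr 1
    omega
  have e2 : (k - sOf b k lam μ) * lam (k-1)
      = (k - sOf b k lam μ) * (lam (k-1) - cOf b k μ) + (k - sOf b k lam μ) * cOf b k μ := by
    rw [← Nat.mul_add]
    congr 1
    omega
  set J := ∑ t, del b k hkb (sOf b k lam μ) (cOf b k μ) μ t with hJ
  set O := ∑ i ∈ Finset.univ.filter (fun i : Fin b => (i:ℕ) < sOf b k lam μ ∨ k ≤ (i:ℕ)), μ i with hO
  set P1 := sOf b k lam μ * lam (k-1) with hP1
  set P2 := (k - sOf b k lam μ) * lam (k-1) with hP2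
  set P3 := (k - sOf b k lam μ) * (lam (k-1) - cOf b k μ) with hP3
  set P4 := (k - sOf b k lam μ) * cOf b k μ with hP4
  set KW := k * lam (k-1) with hKW
  clear_value J O P1 P2 P3 P4 KW
  omega

lemma phi_facts (hk : 1 ≤ k) (hkb : k ≤ b)
    (hanti : ∀ i j, i ≤ j → j < b → lam j ≤ lam i)
    (hμ : μ ∈ S b lam n) (hn : 2*n+1 ≤ k * lam (k-1)) :
    phi b k hkb lam μ ∈ S b lam (n+1)
    ∧ sOf b k lam (phi b k hkb lam μ) = sOf b k lam μ
    ∧ cOf b k (phi b k hkb lam μ) = cOf b k μ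
    ∧ (∀ i : Fin b, ((i:ℕ) < sOf b k lam μ ∨ k ≤ (i:ℕ)) → phi b k hkb lam μ i = μ i)
    ∧ del b k hkb (sOf b k lam μ) (cOf b k μ) (phi b k hkb lam μ)
        = boxInj (k - sOf b k lam μ) (lam (k-1) - cOf b k μ)
            (∑ t, del b k hkb (sOf b k lam μ) (cOf b k μ) μ t)
            (del b k hkb (sOf b k lam μ) (cOf b k μ) μ) := by
  obtain ⟨hbounds, hmono, hsum⟩ := mem_S.mp hμ
  have hs := sOf_le (lam := lam) (μ := μ) hkb
  have hcw := cOf_le_w hk hkb hanti hbounds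
  have hjb := Jbound hk hkb hanti hμ hn
  have hδ := del_PD (lam := lam) hkb hmono
  have hβ := (boxInj_spec _ _ _ hjb).2 _ hδ
  obtain ⟨hβbox, hβdec, hβsum⟩ := mem_PD.mp hβ
  -- value lemmas for phi
  have hout : ∀ i : Fin b, ((i:ℕ) < sOf b k lam μ ∨ k ≤ (i:ℕ)) → phi b k hkb lam μ i = μ i := by
    intro i hi
    rw [phi, phiExp]
    exact dif_pos hi
  have hmid : ∀ (i : Fin b) (hi : ¬((i:ℕ) < sOf b k lam μ ∨ k ≤ (i:ℕ))),
      phi b k hkb lam μ i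
        = boxInj (k - sOf b k lam μ) (lam (k-1) - cOf b k μ)
            (∑ t, del b k hkb (sOf b k lam μ) (cOf b k μ) μ t)
            (del b k hkb (sOf b k lam μ) (cOf b k μ) μ)
            ⟨(i:ℕ) - sOf b k lam μ, by have := i.isLt; omega⟩ + cOf b k μ := by
    intro i hi
    rw [phi, phiExp]
    exact dif_neg hi
  -- region facts
  have hgt : ∀ i : Fin b, (i:ℕ) < sOf b k lam μ → lam (k-1) < μ i := by
    intro i hi
    exact (region hmono i (by omega)).mp hi
  have hle : ∀ i : Fin b, ¬((i:ℕ) < sOf b k lam μ) → (i:ℕ) < k → μ i ≤ lam (k-1) := by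
    intro i hi hik
    by_contra hgt'
    exact hi ((region hmono i hik).mpr (by omega))
  -- membership of phi μ in S (n+1)
  have hmem : phi b k hkb lam μ ∈ S b lam (n+1) := by
    rw [mem_S]
    refine ⟨?_, ?_, ?_⟩
    · intro i
      by_cases hi : ((i:ℕ) < sOf b k lam μ ∨ k ≤ (i:ℕ))
      · rw [hout i hi]; exact hbounds i
      · rw [hmid i hi]
        have h1 := hβbox ⟨(i:ℕ) - sOf b k lam μ, by have := i.isLt; omega⟩
        have h2 : lam (k-1) ≤ lam (i:ℕ) := hanti (i:ℕ) (k-1) (by omega) (by omega)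
        omega
    · intro i j hij
      have hij' : (i:ℕ) ≤ (j:ℕ) := hij
      by_cases hi : ((i:ℕ) < sOf b k lam μ ∨ k ≤ (i:ℕ))
        <;> by_cases hj : ((j:ℕ) < sOf b k lam μ ∨ k ≤ (j:ℕ))
      · rw [hout i hi, hout j hj]; exact hmono i j hij
      · -- i out, j mid
        rw [hout i hi, hmid j hj]
        rcases hi with hi | hi
        · have := hgt i hi
          have h1 := hβbox ⟨(j:ℕ) - sOf b k lam μ, by have := j.isLt; omega⟩
          omega
        · omega
      · -- i mid, j out
        rw [hmid i hi, hout j hj]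
        rcases hj with hj | hj
        · omega
        · have hkb' : k < b := lt_of_le_of_lt hj j.isLt
          have h1 : μ j ≤ cOf b k μ := by
            rw [cOf, dif_pos hkb']
            exact hmono ⟨k, hkb'⟩ j (by rw [Fin.le_def]; exact hj)
          omega
      · -- both mid
        rw [hmid i hi, hmid j hj]
        have h1 := hβdec ⟨(i:ℕ) - sOf b k lam μ, by have := i.isLt; omega⟩
          ⟨(j:ℕ) - sOf b k lam μ, by have := j.isLt; omega⟩
          (by rw [Fin.le_def]; simp only; omega)
        omega
    · -- sum
      have hsplit := sum_split hkb (sOf b k lam μ) hs (phi b k hkb lam μ)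
      have hvals : ∀ t : Fin (k - sOf b k lam μ),
          phi b k hkb lam μ ⟨sOf b k lam μ + t.1, by have := t.isLt; omega⟩
            = boxInj (k - sOf b k lam μ) (lam (k-1) - cOf b k μ)
                (∑ t, del b k hkb (sOf b k lam μ) (cOf b k μ) μ t)
                (del b k hkb (sOf b k lam μ) (cOf b k μ) μ) t + cOf b k μ := by
        intro t
        have hnotP : ¬(((⟨sOf b k lam μ + t.1, by have := t.isLt; omega⟩ : Fin b):ℕ) < sOf b k lam μ
            ∨ k ≤ ((⟨sOf b k lam μ + t.1, by have := t.isLt; omega⟩ : Fin b):ℕ)) := by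
          simp only
          have := t.isLt
          omega
        rw [hmid _ hnotP]
        congr 2
        ext
        simp only
        omega
      have e1 : (∑ i ∈ Finset.univ.filter (fun i : Fin b => (i:ℕ) < sOf b k lam μ ∨ k ≤ (i:ℕ)),
            phi b k hkb lam μ i)
          = ∑ i ∈ Finset.univ.filter (fun i : Fin b => (i:ℕ) < sOf b k lam μ ∨ k ≤ (i:ℕ)), μ i := by
        refine Finset.sum_congr rfl fun i hi => ?_
        simp only [Finset.mem_filter, Finset.mem_univ, true_and] at hi
        exact hout i hi
      have e2 : (∑ t : Fin (k - sOf b k lam μ),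
            phi b k hkb lam μ ⟨sOf b k lam μ + t.1, by have := t.isLt; omega⟩)
          = (∑ t, del b k hkb (sOf b k lam μ) (cOf b k μ) μ t) + 1
              + (k - sOf b k lam μ) * cOf b k μ := by
        rw [Finset.sum_congr rfl (fun t _ => hvals t), Finset.sum_add_distrib,
          Finset.sum_const, Finset.card_univ, Fintype.card_fin, smul_eq_mul, hβsum]
      have hdec := n_decomp (lam := lam) hkb hmono hsum
      rw [hsplit, e1, e2]
      omega
  refine ⟨hmem, ?_, ?_, hout, ?_⟩
  · -- sOf phi = sOf μ
    rw [sOf, sOf]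
    congr 1
    ext i
    simp only [Finset.mem_filter, Finset.mem_univ, true_and]
    constructor
    · rintro ⟨hik, hwi⟩
      refine ⟨hik, ?_⟩
      by_cases hi : ((i:ℕ) < sOf b k lam μ ∨ k ≤ (i:ℕ))
      · rwa [hout i hi] at hwi
      · exfalso
        rw [hmid i hi] at hwi
        have h1 := hβbox ⟨(i:ℕ) - sOf b k lam μ, by have := i.isLt; omega⟩
        omega
    · rintro ⟨hik, hwi⟩
      refine ⟨hik, ?_⟩
      have hi : ((i:ℕ) < sOf b k lam μ ∨ k ≤ (i:ℕ)) := by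
        left
        by_contra h
        exact absurd (hle i h hik) (by omega)
      rwa [hout i hi]
  · -- cOf phi = cOf μ
    rw [cOf, cOf]
    split_ifs with h
    · exact hout ⟨k, h⟩ (Or.inr (le_refl k))
    · rfl
  · -- del of phi = boxInj of del
    funext t
    rw [del]
    have hnotP : ¬(((⟨sOf b k lam μ + t.1, by have := t.isLt; omega⟩ : Fin b):ℕ) < sOf b k lam μ
        ∨ k ≤ ((⟨sOf b k lam μ + t.1, by have := t.isLt; omega⟩ : Fin b):ℕ)) := by
      simp only
      have := t.isLt
      omega
    rw [hmid _ hnotP]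
    simp only [Nat.add_sub_cancel]
    congr 1
    ext
    simp only
    omega

lemma recover' (hkb : k ≤ b) (s c : ℕ) (i : Fin b) (hcle : c ≤ μ i)
    (hsi : s ≤ (i:ℕ)) (hik : (i:ℕ) < k) :
    μ i = del b k hkb s c μ ⟨(i:ℕ) - s, by omega⟩ + c := by
  rw [del]
  have hidx : (⟨s + ((i:ℕ) - s), by omega⟩ : Fin b) = i := by
    ext
    simp only
    omega
  rw [hidx]
  omega

lemma S_step (hk : 1 ≤ k) (hkb : k ≤ b)
    (hanti : ∀ i j, i ≤ j → j < b → lam j ≤ lam i)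
    (hn : 2*n+1 ≤ k * lam (k-1)) :
    (S b lam n).card ≤ (S b lam (n+1)).card := by
  apply Finset.card_le_card_of_injOn (phi b k hkb lam)
  · intro μ hμ
    exact (phi_facts hk hkb hanti hμ hn).1
  · intro μ hμ μ' hμ' heq
    simp only [Finset.mem_coe] at hμ hμ'
    obtain ⟨h1, h2, h3, h4, h5⟩ := phi_facts hk hkb hanti hμ hn
    obtain ⟨h1', h2', h3', h4', h5'⟩ := phi_facts hk hkb hanti hμ' hn
    have hmono := (mem_S.mp hμ).2.1
    have hmono' := (mem_S.mp hμ').2.1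
    have hs : sOf b k lam μ = sOf b k lam μ' := by rw [← h2, ← h2', heq]
    have hc : cOf b k μ = cOf b k μ' := by rw [← h3, ← h3', heq]
    rw [← hs, ← hc] at h5'
    have hβeq : boxInj (k - sOf b k lam μ) (lam (k-1) - cOf b k μ)
          (∑ t, del b k hkb (sOf b k lam μ) (cOf b k μ) μ t)
          (del b k hkb (sOf b k lam μ) (cOf b k μ) μ)
        = boxInj (k - sOf b k lam μ) (lam (k-1) - cOf b k μ)
          (∑ t, del b k hkb (sOf b k lam μ) (cOf b k μ) μ' t)
          (del b k hkb (sOf b k lam μ) (cOf b k μ) μ') := by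
      rw [← h5, ← h5', heq]
    have hjb := Jbound hk hkb hanti hμ hn
    have hjb' := Jbound hk hkb hanti hμ' hn
    rw [← hs, ← hc] at hjb'
    have hδ := del_PD (lam := lam) (μ := μ) hkb hmono
    have hδ' := del_PD (lam := lam) (μ := μ') hkb hmono'
    rw [← hs, ← hc] at hδ'
    have hβ := (boxInj_spec _ _ _ hjb).2 _ hδ
    have hβ' := (boxInj_spec _ _ _ hjb').2 _ hδ'
    have hJ : (∑ t, del b k hkb (sOf b k lam μ) (cOf b k μ) μ t)
        = (∑ t, del b k hkb (sOf b k lam μ) (cOf b k μ) μ' t) := by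
      have e1 := (mem_PD.mp hβ).2.2
      have e2 := (mem_PD.mp hβ').2.2
      rw [hβeq] at e1
      rw [e1] at e2
      omega
    rw [← hJ] at hβeq hδ' hjb'
    have hδeq : del b k hkb (sOf b k lam μ) (cOf b k μ) μ
        = del b k hkb (sOf b k lam μ) (cOf b k μ) μ' :=
      (boxInj_spec _ _ _ hjb).1 hδ hδ' hβeq
    funext i
    by_cases hi : ((i:ℕ) < sOf b k lam μ ∨ k ≤ (i:ℕ))
    · have e1 := h4 i hi
      have e2 := h4' i (by rwa [hs] at hi)
      rw [← e1, ← e2, heq]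
    · have hik : (i:ℕ) < k := by omega
      have hsi : sOf b k lam μ ≤ (i:ℕ) := by omega
      have e1 := recover' (μ := μ) hkb (sOf b k lam μ) (cOf b k μ) i
        (cOf_le_mu hkb hmono i hik) hsi hik
      have e2 := recover' (μ := μ') hkb (sOf b k lam μ) (cOf b k μ) i
        (by rw [hc]; exact cOf_le_mu hkb hmono' i hik) hsi hik
      rw [e1, e2, hδeq]
end


end Stmt4Aux

/-- For any partition `λ` of length `b` and any `1 ≤ k ≤ b`, the coefficients
`a₀, a₁, …, a_⌈k·λ_k/2⌉` of `G_λ(q)` are weakly increasing.  Here `λ_k = lam (k-1)`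
and `⌈x/2⌉ = (x+1)/2` (natural division). -/
theorem stmt4 (b k : ℕ) (hk : 1 ≤ k) (hkb : k ≤ b) (lam : ℕ → ℕ)
    (hanti : ∀ i j, i ≤ j → j < b → lam j ≤ lam i) :
    ∀ n m : ℕ, n ≤ m → m ≤ (k * lam (k - 1) + 1) / 2 →
      subCount b lam n ≤ subCount b lam m := by
  intro n m hnm hm
  have hsub : ∀ j, subCount b lam j = (Stmt4Aux.S b lam j).card := fun j => rfl
  rw [hsub, hsub]
  induction m, hnm using Nat.le_induction with
  | base => exact le_refl _
  | succ m hnm ih =>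
      have hm' : m ≤ (k * lam (k - 1) + 1) / 2 := by omega
      have hstep : 2*m+1 ≤ k * lam (k-1) := by omega
      exact le_trans (ih hm') (Stmt4Aux.S_step hk hkb hanti hstep)
end

section
/- Let C be a finite multiset of positive integers with gcd equal to 1 and |C| ≥ 2. Then the coefficient of x^n in Π_{c∈C} 1/(1−x^c) equals (Π_{c∈C} 1/c)·binom(n, |C|−1) + O(n^{|C|−2}), i.e., there is a constant K depending only on C such that |[x^n]Π_{c∈C}1/(1−x^c) − (Π_{c∈C}1/c)·n^{|C|−1}/(|C|−1)!| ≤ K·(n+1)^{|C|−2} for all n ≥ 0. -/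
/-!
Put `L = lcm C` and `k = |C|`. For `c ∣ L`, `1/(1 - x^c) = Q_c(x)/(1 - x^L)` with
`Q_c = 1 + x^c + ⋯ + x^(L-c)`, so the series is `Q(x) (1 - x^L)^(-k)` with `Q = ∏ Q_c` a
polynomial, and its `n`-th coefficient is `∑ Q_j binom((n - j)/L + k - 1, k - 1)` over
`j ≡ n (mod L)`. Each binomial is `(n/L)^(k-1)/(k-1)! + O(n^(k-2))`: both are polynomials in `n`
of degree `k - 1` with the same leading coefficient. The main terms add up to the claimed one
because the coefficients of `Q` are equidistributed modulo `L`: the image of `Q` in `ℚ[ℤ/L]` is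
invariant under translation by every `c ∈ C` (since `x^c Q_c ≡ Q_c` modulo `x^L - 1`), hence by
`gcd C = 1`, so `∑_{j ≡ r} Q_j = Q(1)/L = L^(k-1) ∏ 1/c` for every residue `r`.
-/

open Finset Filter Asymptotics

theorem Multiset.natCast_gcd_mem {G : Type*} [AddCommGroupWithOne G] (S : AddSubgroup G)
    (C : Multiset ℕ) (hC : ∀ c ∈ C, (c : G) ∈ S) : (C.gcd : G) ∈ S := by
  induction C using Multiset.induction with
  | empty => simp
  | cons a C ih =>
    have hbezout : ((Nat.gcd a C.gcd : ℕ) : G)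
        = Nat.gcdA a C.gcd • (a : G) + Nat.gcdB a C.gcd • (C.gcd : G) := by
      rw [← Int.cast_natCast, Nat.gcd_eq_gcd_ab, mul_comm, mul_comm (C.gcd : ℤ), Int.cast_add,
        Int.cast_mul_eq_zsmul_cast, Int.cast_mul_eq_zsmul_cast, Int.cast_natCast, Int.cast_natCast]
    rw [Multiset.gcd_cons, gcd_eq_nat_gcd, hbezout]
    exact add_mem (zsmul_mem (hC a (Multiset.mem_cons_self a C)) _)
      (zsmul_mem (ih fun c hc => hC c (Multiset.mem_cons_of_mem hc)) _)

theorem exists_abs_le_mul_of_isBigO_nat {f g : ℕ → ℚ} (hg : ∀ n, 0 < g n)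
    (h : f =O[atTop] g) : ∃ K : ℚ, ∀ n, |f n| ≤ K * g n := by
  obtain ⟨K, hK⟩ := (isBigO_nat_atTop_iff fun n hn => absurd hn (hg n).ne').mp h
  obtain ⟨q, hq⟩ := exists_rat_gt K
  refine ⟨q, fun n => ?_⟩
  have hnorm (x : ℚ) : ‖x‖ = ((|x| : ℚ) : ℝ) := by
    rw [← Rat.norm_cast_real, Real.norm_eq_abs, Rat.cast_abs]
  have hn := (hK n).trans (mul_le_mul_of_nonneg_right hq.le (norm_nonneg _))
  rw [hnorm, hnorm, abs_of_pos (hg n)] at hn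
  exact_mod_cast hn

namespace AddMonoidAlgebra

variable {R G : Type*} [CommSemiring R] [AddCommGroup G]

def shiftStabilizer (x : AddMonoidAlgebra R G) : AddSubgroup G where
  carrier := {t | single t 1 * x = x}
  zero_mem' := by simp [← one_def]
  add_mem' {a b} ha hb := by
    simp only [Set.mem_ofPred_eq] at ha hb ⊢
    rw [← mul_one (1 : R), ← single_mul_single, mul_assoc, hb, ha]
  neg_mem' {a} ha := by
    simp only [Set.mem_ofPred_eq] at ha ⊢
    conv_lhs => rw [← ha, ← mul_assoc, single_mul_single, neg_add_cancel, mul_one, ← one_def,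
      one_mul]

theorem coeff_eq_coeff_zero_of_shiftStabilizer_eq_top {x : AddMonoidAlgebra R G}
    (hx : shiftStabilizer x = ⊤) (r : G) : x.coeff r = x.coeff 0 := by
  have hr : single r 1 * x = x := (AddSubgroup.eq_top_iff' _).mp hx r
  conv_lhs => rw [← hr]
  simp

end AddMonoidAlgebra

namespace Polynomial

open AddMonoidAlgebra

noncomputable def geomSumPow {R : Type*} [Semiring R] (c L : ℕ) : R[X] :=
  ∑ i ∈ range (L / c), (X ^ c) ^ i

theorem eval_one_prod_geomSumPow {K : Type*} [Field K] [CharZero K] {C : Multiset ℕ}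
    (hC : ∀ c ∈ C, c ≠ 0) {L : ℕ} (hdvd : ∀ c ∈ C, c ∣ L) :
    (C.map fun c => (geomSumPow c L : K[X])).prod.eval 1
      = (L : K) ^ Multiset.card C * (C.map fun c : ℕ => (1 : K) / c).prod := by
  rw [eval_multiset_prod, Multiset.map_map, ← Multiset.prod_replicate, ← Multiset.map_const',
    ← Multiset.prod_map_mul]
  refine congrArg _ (Multiset.map_congr rfl fun c hc => ?_)
  simp only [Function.comp_apply, geomSumPow, eval_finsetSum, eval_pow, eval_X, one_pow,
    sum_const, card_range, nsmul_eq_mul, mul_one]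
  rw [Nat.cast_div (hdvd c hc) (Nat.cast_ne_zero.mpr (hC c hc)), div_eq_mul_one_div]

section Residue

variable {R : Type*} [CommRing R] (L : ℕ)

noncomputable def residueMap : R[X] →ₐ[R] AddMonoidAlgebra R (ZMod L) :=
  aeval (single 1 1)

theorem residueMap_monomial (j : ℕ) (a : R) :
    residueMap L (monomial j a) = single (j : ZMod L) a := by
  rw [← C_mul_X_pow_eq_monomial, map_mul, residueMap, aeval_C, map_pow, aeval_X, single_pow]
  simp

theorem residueMap_X_pow (j : ℕ) : residueMap L (X ^ j : R[X]) = single (j : ZMod L) 1 := by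
  rw [X_pow_eq_monomial, residueMap_monomial]

theorem coeff_residueMap {P : R[X]} {N : ℕ} (hN : P.natDegree < N) (r : ZMod L) :
    (residueMap L P).coeff r = ∑ i ∈ range N, if (i : ZMod L) = r then P.coeff i else 0 := by
  conv_lhs => rw [P.as_sum_range' N hN]
  simp [residueMap_monomial, Finsupp.single_apply]

theorem sum_range_coeff_mul_ite_eq_coeff_residueMap_mul {P : R[X]} {N : ℕ} (hN : P.natDegree < N)
    (r : ZMod L) (t : R) :
    ∑ j ∈ range N, P.coeff j * (if (j : ZMod L) = r then t else 0)
      = (residueMap L P).coeff r * t := by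
  rw [coeff_residueMap L hN, sum_mul]
  simp [mul_ite]

theorem sum_coeff_residueMap [NeZero L] (P : R[X]) :
    ∑ r : ZMod L, (residueMap L P).coeff r = P.eval 1 := by
  simp_rw [coeff_residueMap L (Nat.lt_succ_self P.natDegree)]
  rw [Finset.sum_comm, eval_eq_sum_range]
  simp

theorem single_mul_residueMap_geomSumPow {c : ℕ} (hcL : c ∣ L) :
    single (c : ZMod L) 1 * residueMap L (geomSumPow c L : R[X])
      = residueMap L (geomSumPow c L) := by
  have h : residueMap L ((geomSumPow c L : R[X]) * (X ^ c - 1)) = 0 := by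
    rw [geomSumPow, geom_sum_mul, ← pow_mul, Nat.mul_div_cancel' hcL, map_sub,
      residueMap_X_pow, ZMod.natCast_self, ← one_def, map_one, sub_self]
  rw [map_mul, map_sub, residueMap_X_pow, map_one] at h
  linear_combination h

theorem natCast_mul_coeff_residueMap_prod_geomSumPow [NeZero L] {C : Multiset ℕ}
    (hdvd : ∀ c ∈ C, c ∣ L) (hgcd : C.gcd = 1) (r : ZMod L) :
    (L : R) * (residueMap L (C.map fun c => (geomSumPow c L : R[X])).prod).coeff r
      = (C.map fun c => (geomSumPow c L : R[X])).prod.eval 1 := by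
  set x := residueMap L (C.map fun c => (geomSumPow c L : R[X])).prod
  have hgen : ∀ c ∈ C, (c : ZMod L) ∈ shiftStabilizer x := by
    intro c hc
    obtain ⟨C', rfl⟩ := Multiset.exists_cons_of_mem hc
    change single (c : ZMod L) 1 * x = x
    simp only [x, Multiset.map_cons, Multiset.prod_cons, map_mul]
    rw [← mul_assoc, single_mul_residueMap_geomSumPow L (hdvd c hc)]
  have hone : (1 : ZMod L) ∈ shiftStabilizer x := by
    simpa [hgcd] using Multiset.natCast_gcd_mem _ C hgen
  have htop : shiftStabilizer x = ⊤ :=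
    (AddSubgroup.eq_top_iff' _).mpr fun t => by simpa using nsmul_mem hone t.val
  rw [← sum_coeff_residueMap L, Finset.sum_congr rfl fun s _ =>
    coeff_eq_coeff_zero_of_shiftStabilizer_eq_top htop s,
    coeff_eq_coeff_zero_of_shiftStabilizer_eq_top htop r, sum_const, card_univ, ZMod.card,
    nsmul_eq_mul]

end Residue

theorem natCast_choose_add_mul_factorial {R : Type*} [CommSemiring R] (m k : ℕ) :
    ((m + k).choose k : R) * k.factorial = (ascPochhammer R k).eval ((m : R) + 1) := by
  rw [← Nat.cast_mul, mul_comm, ← Nat.ascFactorial_eq_factorial_mul_choose,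
    ← ascPochhammer_nat_eq_ascFactorial, ← Nat.cast_succ, ascPochhammer_eval_cast]

theorem degree_ascPochhammer_comp_sub_lt {K : Type*} [Field K] (k : ℕ) {a : K} (ha : a ≠ 0)
    (b : K) :
    ((ascPochhammer K k).comp (C a * X + C b) - (C a * X) ^ k).degree < (k : WithBot ℕ) := by
  set p := (ascPochhammer K k).comp (C a * X + C b)
  have hlin : (C a * X + C b).natDegree = 1 := natDegree_linear ha
  have hlead : p.leadingCoeff = a ^ k := by
    rw [leadingCoeff_comp (by omega), (monic_ascPochhammer K k).leadingCoeff,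
      ascPochhammer_natDegree, leadingCoeff_linear ha, one_mul]
  have hp : p ≠ 0 := leadingCoeff_ne_zero.mp (hlead ▸ pow_ne_zero k ha)
  have hdeg : p.degree = k := by
    rw [degree_eq_natDegree hp, natDegree_comp, hlin, ascPochhammer_natDegree, mul_one]
  have hmon : (C a * X) ^ k = C (a ^ k) * X ^ k := by rw [mul_pow, C_pow]
  refine hdeg ▸ degree_sub_lt_left ?_ hp ?_
  · rw [hdeg, hmon, degree_C_mul_X_pow k (pow_ne_zero k ha)]
  · rw [hlead, hmon, leadingCoeff_C_mul_X_pow]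

theorem isBigO_eval_natCast_of_degree_lt {𝕜 : Type*} [NormedField 𝕜] [LinearOrder 𝕜]
    [IsStrictOrderedRing 𝕜] [OrderTopology 𝕜] [Archimedean 𝕜] {P : 𝕜[X]} {d : ℕ}
    (h : P.degree < d) :
    (fun n : ℕ => P.eval (n : 𝕜)) =O[atTop] fun n => ((n : 𝕜) + 1) ^ (d - 1) := by
  have hle : P.degree ≤ ((X + 1 : 𝕜[X]) ^ (d - 1)).degree := by
    rw [← C_1, degree_pow, degree_X_add_C, nsmul_one]
    rcases eq_or_ne P 0 with rfl | hP
    · simp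
    rw [degree_eq_natDegree hP] at h ⊢
    exact_mod_cast Nat.le_sub_one_of_lt (by exact_mod_cast h)
  simpa [Function.comp_def] using
    (isBigO_atTop_of_degree_le _ _ hle).comp_tendsto tendsto_natCast_atTop_atTop

end Polynomial

namespace PowerSeries

section CommRing

variable {R : Type*} [CommRing R]

theorem coeff_expand_invOneSubPow_succ {L : ℕ} (hL : L ≠ 0) (d n : ℕ) :
    coeff n (expand L hL (invOneSubPow R (d + 1)).val)
      = if L ∣ n then ((n / L + d).choose d : R) else 0 := by
  rw [coeff_expand, invOneSubPow_val_succ_eq_mk_add_choose, coeff_mk, add_comm]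

theorem expand_invOneSubPow_mul_one_sub_X_pow {L : ℕ} (hL : L ≠ 0) (d : ℕ) :
    expand L hL (invOneSubPow R d).val * (1 - X ^ L) ^ d = 1 := by
  have h := congrArg (expand L hL) (invOneSubPow R d).val_inv
  rwa [map_mul, invOneSubPow_inv_eq_one_sub_pow, map_pow, map_sub, map_one, expand_X] at h

theorem mk_dvd_indicator_eq_expand {c : ℕ} (hc : c ≠ 0) :
    (mk fun m => if c ∣ m then (1 : R) else 0) = expand c hc (invOneSubPow R 1).val := by
  ext n
  simp [coeff_expand_invOneSubPow_succ]

theorem mk_dvd_indicator_mul_one_sub_X_pow {c L : ℕ} (hc : c ≠ 0) (hcL : c ∣ L) :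
    (mk fun m => if c ∣ m then (1 : R) else 0) * (1 - X ^ L)
      = ((Polynomial.geomSumPow c L : Polynomial R) : R⟦X⟧) := by
  have hgeom : ((Polynomial.geomSumPow c L : Polynomial R) : R⟦X⟧) * (X ^ c - 1) = X ^ L - 1 := by
    have := congrArg (Polynomial.coeToPowerSeries.ringHom (R := R))
      (geom_sum_mul (Polynomial.X ^ c : Polynomial R) (L / c))
    simpa [Polynomial.geomSumPow, ← pow_mul, Nat.mul_div_cancel' hcL] using this
  have hinv := expand_invOneSubPow_mul_one_sub_X_pow (R := R) hc 1
  rw [pow_one] at hinv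
  rw [mk_dvd_indicator_eq_expand hc]
  linear_combination ((Polynomial.geomSumPow c L : Polynomial R) : R⟦X⟧) * hinv
    + expand c hc (invOneSubPow R 1).val * hgeom

theorem prod_mk_dvd_indicator_eq_geomSumPow_mul_expand (C : Multiset ℕ) (hC : ∀ c ∈ C, c ≠ 0)
    {L : ℕ} (hL : L ≠ 0) (hdvd : ∀ c ∈ C, c ∣ L) :
    (C.map fun c => mk fun m => if c ∣ m then (1 : R) else 0).prod
      = (((C.map fun c => Polynomial.geomSumPow c L).prod : Polynomial R) : R⟦X⟧)
        * expand L hL (invOneSubPow R (Multiset.card C)).val := by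
  set F := (C.map fun c => mk fun m => if c ∣ m then (1 : R) else 0).prod
  have hF : F * (1 - X ^ L) ^ Multiset.card C
      = (((C.map fun c => Polynomial.geomSumPow c L).prod : Polynomial R) : R⟦X⟧) := by
    rw [← Multiset.prod_replicate, ← Multiset.map_const', ← Multiset.prod_map_mul,
      ← Polynomial.coeToPowerSeries.ringHom_apply, map_multiset_prod, Multiset.map_map]
    exact congrArg _ (Multiset.map_congr rfl fun c hc =>
      mk_dvd_indicator_mul_one_sub_X_pow (hC c hc) (hdvd c hc))
  calc F = F * (expand L hL (invOneSubPow R (Multiset.card C)).val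
        * (1 - X ^ L) ^ Multiset.card C) := by
        rw [expand_invOneSubPow_mul_one_sub_X_pow, mul_one]
    _ = _ := by rw [← hF]; ring

end CommRing

theorem coeff_coe_mul_of_natDegree_le {R : Type*} [CommSemiring R] (P : Polynomial R)
    (f : R⟦X⟧) {n : ℕ} (hn : P.natDegree ≤ n) :
    coeff n ((P : R⟦X⟧) * f) = ∑ j ∈ range (P.natDegree + 1), P.coeff j * coeff (n - j) f := by
  rw [coeff_mul, Finset.Nat.sum_antidiagonal_eq_sum_range_succ_mk]
  simp only [Polynomial.coeff_coe]
  refine (Finset.sum_subset (range_subset_range.mpr (by omega)) fun j _ hj => ?_).symm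
  rw [Polynomial.coeff_eq_zero_of_natDegree_lt (by simpa using hj), zero_mul]

theorem isBigO_coeff_expand_invOneSubPow_sub {L : ℕ} (hL : L ≠ 0) (k j : ℕ) :
    (fun n : ℕ => coeff (n - j) (expand L hL (invOneSubPow ℚ (k + 1)).val)
        - if (j : ZMod L) = n then ((n : ℚ) / L) ^ k / k.factorial else 0)
      =O[atTop] fun n => ((n : ℚ) + 1) ^ (k - 1) := by
  -- for `L ∣ n - j`, `P.eval n = k! * binom((n - j) / L + k, k) - (n / L) ^ k`
  set P : Polynomial ℚ := (ascPochhammer ℚ k).comp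
      (Polynomial.C (L : ℚ)⁻¹ * Polynomial.X + Polynomial.C (1 - (j : ℚ) / L))
    - (Polynomial.C (L : ℚ)⁻¹ * Polynomial.X) ^ k
  have hP := Polynomial.isBigO_eval_natCast_of_degree_lt
    (Polynomial.degree_ascPochhammer_comp_sub_lt k
      (inv_ne_zero (Nat.cast_ne_zero.mpr hL : (L : ℚ) ≠ 0)) (1 - (j : ℚ) / L))
  refine (IsBigO.of_bound (k.factorial : ℝ)⁻¹ ?_).trans hP
  filter_upwards [eventually_ge_atTop j] with n hjn
  have hcong : (j : ZMod L) = n ↔ L ∣ n - j := by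
    rw [ZMod.natCast_eq_natCast_iff, Nat.modEq_iff_dvd' hjn]
  rw [coeff_expand_invOneSubPow_succ]
  by_cases hdvd : L ∣ n - j
  · rw [if_pos hdvd, if_pos (hcong.mpr hdvd)]
    have hm : (((n - j) / L : ℕ) : ℚ) = ((n : ℚ) - j) / L := by
      rw [Nat.cast_div hdvd (Nat.cast_ne_zero.mpr hL), Nat.cast_sub hjn]
    have heval : ((((n - j) / L + k).choose k : ℕ) : ℚ) - ((n : ℚ) / L) ^ k / k.factorial
        = P.eval (n : ℚ) / k.factorial := by
      rw [eq_div_iff (Nat.cast_ne_zero.mpr k.factorial_ne_zero), sub_mul,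
        Polynomial.natCast_choose_add_mul_factorial, hm]
      simp only [P, Polynomial.eval_sub, Polynomial.eval_comp, Polynomial.eval_pow,
        Polynomial.eval_add, Polynomial.eval_mul, Polynomial.eval_C, Polynomial.eval_X]
      field_simp
      ring_nf
    rw [heval, norm_div, div_eq_inv_mul, ← Rat.norm_cast_real, Rat.cast_natCast,
      RCLike.norm_natCast]
  · rw [if_neg hdvd, if_neg (mt hcong.mp hdvd), sub_zero, norm_zero]
    positivity

open Polynomial in
theorem isBigO_coeff_prod_mk_dvd_indicator_sub (C : Multiset ℕ) (hpos : ∀ c ∈ C, 0 < c)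
    (hgcd : C.gcd = 1) :
    (fun n : ℕ => coeff n ((C.map fun c => mk fun m => if c ∣ m then (1 : ℚ) else 0).prod)
        - (C.map fun c : ℕ => (1 : ℚ) / c).prod * (n : ℚ) ^ (Multiset.card C - 1)
          / (Multiset.card C - 1).factorial)
      =O[atTop] fun n => ((n : ℚ) + 1) ^ (Multiset.card C - 2) := by
  have hC : ∀ c ∈ C, c ≠ 0 := fun c hc => (hpos c hc).ne'
  obtain ⟨k, hk⟩ : ∃ k, Multiset.card C = k + 1 := Nat.exists_eq_succ_of_ne_zero fun h => by
    simp [Multiset.card_eq_zero.mp h] at hgcd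
  set L := C.lcm
  have hL : L ≠ 0 := fun h => hC 0 ((Multiset.lcm_eq_zero_iff C).mp h) rfl
  have : NeZero L := ⟨hL⟩
  have hdvd : ∀ c ∈ C, c ∣ L := fun c hc => Multiset.dvd_lcm hc
  set Q : ℚ[X] := (C.map fun c => geomSumPow c L).prod
  set A := (C.map fun c : ℕ => (1 : ℚ) / c).prod
  have hres (r : ZMod L) : (residueMap L Q).coeff r = L ^ k * A := by
    have h := natCast_mul_coeff_residueMap_prod_geomSumPow (R := ℚ) L hdvd hgcd r
    rw [eval_one_prod_geomSumPow hC hdvd, hk, pow_succ'] at h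
    exact mul_left_cancel₀ (Nat.cast_ne_zero.mpr hL) (h.trans (mul_assoc _ _ _))
  have hF := prod_mk_dvd_indicator_eq_geomSumPow_mul_expand (R := ℚ) C hC hL hdvd
  rw [hk] at hF ⊢
  rw [Nat.add_sub_cancel, show k + 1 - 2 = k - 1 by omega]
  refine IsBigO.congr' (f₁ := fun n => ∑ j ∈ range (Q.natDegree + 1), Q.coeff j *
      (coeff (n - j) (expand L hL (invOneSubPow ℚ (k + 1)).val)
        - if (j : ZMod L) = n then ((n : ℚ) / L) ^ k / k.factorial else 0)) ?_ ?_ .rfl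
  · exact IsBigO.fun_sum fun j _ => (isBigO_coeff_expand_invOneSubPow_sub hL k j).const_mul_left _
  · filter_upwards [eventually_ge_atTop Q.natDegree] with n hn
    rw [hF, coeff_coe_mul_of_natDegree_le _ _ hn]
    simp_rw [mul_sub, sum_sub_distrib,
      sum_range_coeff_mul_ite_eq_coeff_residueMap_mul L (Nat.lt_succ_self _), hres, div_pow]
    field_simp

end PowerSeries

theorem stmt11_general (C : Multiset ℕ) (hpos : ∀ c ∈ C, 0 < c) (hgcd : C.gcd = 1) :
    ∃ K : ℚ, ∀ n : ℕ,
      |(PowerSeries.coeff n)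
          ((C.map fun c => PowerSeries.mk fun m => if c ∣ m then (1 : ℚ) else 0).prod)
        - (C.map fun c => (1 : ℚ) / c).prod * (n : ℚ) ^ (Multiset.card C - 1)
            / (Nat.factorial (Multiset.card C - 1))|
      ≤ K * ((n : ℚ) + 1) ^ (Multiset.card C - 2) := by
  -- `fun c => (1 : ℚ) / c` above is elaborated on the coercion of `C` to `Multiset ℚ`
  rw [show (C.map fun c => (1 : ℚ) / c).prod = (C.map fun c : ℕ => (1 : ℚ) / c).prod by
    simp [Multiset.map_map]]
  exact exists_abs_le_mul_of_isBigO_nat (fun n => by positivity)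
    (PowerSeries.isBigO_coeff_prod_mk_dvd_indicator_sub C hpos hgcd)

/-- Let `C` be a finite multiset of positive integers with `gcd C = 1` and `|C| ≥ 2`.
The coefficient of `xⁿ` in `∏_{c∈C} 1/(1-x^c)` (where `1/(1-x^c)` is the power series
`Σ_{c ∣ m} x^m`) equals `(∏_{c∈C} 1/c)·n^{|C|-1}/(|C|-1)! + O(n^{|C|-2})`. -/
theorem stmt11 (C : Multiset ℕ) (hpos : ∀ c ∈ C, 0 < c) (hgcd : C.gcd = 1)
    (hcard : 2 ≤ Multiset.card C) :
    ∃ K : ℚ, ∀ n : ℕ,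
      |(PowerSeries.coeff n)
          ((C.map fun c => PowerSeries.mk fun m => if c ∣ m then (1 : ℚ) else 0).prod)
        - (C.map fun c => (1 : ℚ) / c).prod * (n : ℚ) ^ (Multiset.card C - 1)
            / (Nat.factorial (Multiset.card C - 1))|
      ≤ K * ((n : ℚ) + 1) ^ (Multiset.card C - 2) :=
  stmt11_general C hpos hgcd
end

section
/- For every integer b ≥ 5, T(b) = Σ_{i=0}^{⌊b/2⌋} (−1)^i (b−2i)^{b−3} · binom(b, i) is nonzero. -/
/-!
Write `b = k + 3` and let `s_k = (-1)^(k+1) Δ_[-2]^[k+1] (t ↦ t₊^k)`, i.e. `2^k k!` times the cardinal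
B-spline of degree `k` with knots `0, 2, …, 2k+2`, sampled at the integers. Then `T(b)` is the
second backward difference `s_k(b) - 2 s_k(b-2) + s_k(b-4)`. The Cox–de Boor recursion
`s_{k+1}(t) = t s_k(t) + (2k+4-t) s_k(t-2)` shows by induction that `s_k ≥ 0`, that `s_k` is
symmetric about `k+1`, and that it increases strictly in steps of two up to `k+1`. Hence
`T(b) = 2 (s_k(k-1) - s_k(k+1)) < 0`.
-/

open Finset fwdDiff

theorem fwdDiff_iter_succ_id_mul {R : Type*} [CommRing R] (h : R) (f : R → R) (n : ℕ) (t : R) :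
    Δ_[h] ^[n + 1] (fun x ↦ x * f x) t
      = t * Δ_[h] ^[n + 1] f t + (n + 1) * h * Δ_[h] ^[n] f (t + h) := by
  induction n generalizing t with
  | zero => simp only [zero_add, Function.iterate_one, fwdDiff, Function.iterate_zero, id]; ring
  | succ n ih =>
    rw [Function.iterate_succ_apply', funext ih]
    simp only [fwdDiff, Function.iterate_succ_apply']
    push_cast
    ring

theorem sum_neg_one_pow_mul_choose_mul_eq_fwdDiff_iter {M R : Type*} [AddCommGroup M]
    [CommRing R] (h : M) (f : M → R) (n : ℕ) (y : M) :
    ∑ i ∈ range (n + 1), (-1) ^ i * (n.choose i : R) * f (y - i • h)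
      = (-1) ^ n * Δ_[-h] ^[n] f y := by
  rw [fwdDiff_iter_eq_sum_shift, mul_sum]
  refine sum_congr rfl fun i hi ↦ ?_
  obtain ⟨j, rfl⟩ := Nat.exists_eq_add_of_le (Nat.lt_succ_iff.mp (mem_range.mp hi))
  rw [zsmul_eq_mul, smul_neg, ← sub_eq_add_neg, Nat.add_sub_cancel_left]
  push_cast
  have hsq : ((-1 : R) ^ j) * (-1) ^ j = 1 := by rw [← mul_pow]; simp
  rw [pow_add]
  linear_combination (-(-1) ^ i * ((i + j).choose i : R) * f (y - i • h)) * hsq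

/-- With `0₊^0 = 0`, so that `t * truncPow k t = truncPow (k + 1) t` holds also for `k = 0`. -/
def truncPow (k : ℕ) (t : ℤ) : ℤ := if 0 < t then t ^ k else 0

theorem mul_truncPow (k : ℕ) (t : ℤ) : t * truncPow k t = truncPow (k + 1) t := by
  unfold truncPow; split_ifs <;> ring

def spline (k : ℕ) (t : ℤ) : ℤ := (-1) ^ (k + 1) * Δ_[-2] ^[k + 1] (truncPow k) t

theorem spline_zero (t : ℤ) : spline 0 t = if 0 < t ∧ t ≤ 2 then 1 else 0 := by
  simp only [spline, zero_add, Function.iterate_one, fwdDiff, truncPow, pow_zero]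
  split_ifs <;> omega

theorem spline_succ (k : ℕ) (t : ℤ) :
    spline (k + 1) t = t * spline k t + (2 * k + 4 - t) * spline k (t - 2) := by
  have hpow : truncPow (k + 1) = fun x ↦ x * truncPow k x :=
    funext fun x ↦ (mul_truncPow k x).symm
  rw [spline, hpow, fwdDiff_iter_succ_id_mul, Function.iterate_succ_apply', spline, spline]
  simp only [fwdDiff, ← sub_eq_add_neg]
  push_cast
  ring

theorem spline_eq_zero_of_nonpos (k : ℕ) {t : ℤ} (ht : t ≤ 0) : spline k t = 0 := by
  induction k generalizing t with
  | zero => rw [spline_zero, if_neg (by omega)]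
  | succ k ih => rw [spline_succ, ih ht, ih (by omega)]; ring

theorem spline_eq_zero_of_lt (k : ℕ) {t : ℤ} (ht : 2 * k + 2 < t) : spline k t = 0 := by
  induction k generalizing t with
  | zero => rw [spline_zero, if_neg (by omega)]
  | succ k ih => rw [spline_succ, ih (by omega), ih (by omega)]; ring

theorem spline_nonneg (k : ℕ) (t : ℤ) : 0 ≤ spline k t := by
  induction k generalizing t with
  | zero => rw [spline_zero]; split_ifs <;> omega
  | succ k ih =>
    rcases le_or_gt t 0 with ht | ht
    · rw [spline_eq_zero_of_nonpos _ ht]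
    rcases le_or_gt t (2 * k + 4) with ht' | ht'
    · have := ih t
      have := ih (t - 2)
      have : (0 : ℤ) ≤ 2 * k + 4 - t := by omega
      rw [spline_succ]
      positivity
    · rw [spline_eq_zero_of_lt _ (by push_cast; omega)]

theorem spline_symm {k : ℕ} (hk : 1 ≤ k) (t : ℤ) : spline k (2 * k + 2 - t) = spline k t := by
  induction k, hk using Nat.le_induction generalizing t with
  | base => simp only [spline_succ, spline_zero]; push_cast; split_ifs <;> omega
  | succ k hk ih =>
    rw [spline_succ, spline_succ, ← ih t, ← ih (t - 2)]
    push_cast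
    ring_nf

theorem spline_lt_spline_add_two {k : ℕ} (hk : 1 ≤ k) {t : ℤ} (ht : -1 ≤ t) (htk : t < k) :
    spline k t < spline k (t + 2) := by
  induction k, hk using Nat.le_induction generalizing t with
  | base => simp only [spline_succ, spline_zero]; push_cast at htk ⊢; split_ifs <;> omega
  | succ k hk ih =>
    push_cast at htk
    have hdiff : spline (k + 1) (t + 2) - spline (k + 1) t
        = (t + 2) * (spline k (t + 2) - spline k t)
          + (2 * k + 4 - t) * (spline k t - spline k (t - 2)) := by
      rw [spline_succ, spline_succ]; ring_nf
    have hle_right : spline k t ≤ spline k (t + 2) := by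
      rcases lt_or_eq_of_le (show t ≤ k by omega) with htk' | rfl
      · exact (ih ht htk').le
      · have := spline_symm hk ((k : ℤ) + 2)
        rw [show 2 * (k : ℤ) + 2 - (k + 2) = k by ring] at this
        exact this.le
    have hle_left : spline k (t - 2) ≤ spline k t := by
      rcases le_or_gt t 0 with ht0 | ht0
      · rw [spline_eq_zero_of_nonpos k (by omega)]; exact spline_nonneg k t
      · simpa using (ih (t := t - 2) (by omega) (by omega)).le
    rcases le_or_gt t 0 with ht0 | ht0
    · have := ih ht (by omega)
      nlinarith
    · have := ih (t := t - 2) (by omega) (by omega)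
      rw [sub_add_cancel] at this
      nlinarith

theorem spline_second_diff_eq_sum (k : ℕ) (t : ℤ) :
    spline k t - 2 * spline k (t - 2) + spline k (t - 4)
      = ∑ i ∈ range (k + 4), (-1) ^ i * ((k + 3).choose i : ℤ) * truncPow k (t - 2 * i) := by
  simp_rw [mul_comm (2 : ℤ), ← nsmul_eq_mul]
  rw [sum_neg_one_pow_mul_choose_mul_eq_fwdDiff_iter, show k + 3 = 2 + (k + 1) by ring,
    Function.iterate_add_apply]
  simp only [Function.iterate_succ_apply', Function.iterate_zero, id, fwdDiff, spline]
  rw [show t - 4 = t + -2 + -2 by ring, ← sub_eq_add_neg]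
  ring

theorem sum_range_div_two_eq_sum_truncPow (b : ℕ) {m : ℕ} (hm : m ≠ 0) :
    ∑ i ∈ range (b / 2 + 1), (-1 : ℤ) ^ i * ((b : ℤ) - 2 * i) ^ m * (b.choose i : ℤ)
      = ∑ i ∈ range (b + 1), (-1) ^ i * (b.choose i : ℤ) * truncPow m (b - 2 * i) := by
  refine sum_subset_zero_on_sdiff (range_subset_range.mpr (by omega)) ?_ ?_
  · intro i hi
    simp only [mem_sdiff, mem_range] at hi
    rw [truncPow, if_neg (by omega), mul_zero]
  · intro i hi
    have : 2 * i ≤ b := by simp only [mem_range] at hi; omega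
    rcases (show (0 : ℤ) ≤ b - 2 * i by omega).lt_or_eq with hpos | hzero
    · rw [truncPow, if_pos hpos]; ring
    · rw [← hzero, truncPow, if_neg (lt_irrefl 0), zero_pow hm]; ring

/-- For every integer `b ≥ 5`,
`T(b) = Σ_{i=0}^{⌊b/2⌋} (-1)^i (b-2i)^(b-3) · binom(b,i)` is nonzero. -/
theorem stmt12 (b : ℕ) (hb : 5 ≤ b) :
    ∑ i ∈ Finset.range (b / 2 + 1),
      (-1 : ℤ) ^ i * ((b : ℤ) - 2 * i) ^ (b - 3) * (Nat.choose b i : ℤ) ≠ 0 := by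
  obtain ⟨k, rfl⟩ : ∃ k, b = k + 3 := ⟨b - 3, by omega⟩
  rw [Nat.add_sub_cancel, sum_range_div_two_eq_sum_truncPow _ (by omega)]
  push_cast
  rw [← spline_second_diff_eq_sum, show (k : ℤ) + 3 - 2 = k + 1 by ring,
    show (k : ℤ) + 3 - 4 = k - 1 by ring]
  have hsymm : spline k (k + 3) = spline k (k - 1) := by
    rw [← spline_symm (k := k) (by omega) (k - 1)]
    congr 1; ring
  have hlt : spline k (k - 1) < spline k (k + 1) := by
    have := spline_lt_spline_add_two (k := k) (t := k - 1) (by omega) (by omega) (by omega)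
    rwa [show (k : ℤ) - 1 + 2 = k + 1 by ring] at this
  rw [hsymm]
  exact ne_of_lt (by linarith)
end

section
/- Let p be an odd prime and k an integer with 1 ≤ k < p, and let b = 3p + k. Then T(b) = Σ_{i=0}^{⌊b/2⌋}(−1)^i (b−2i)^{b−3} binom(b,i) satisfies T(b) ≡ −2·Σ_{j=0}^{k}(−1)^j (k−2j)^k binom(k,j) (mod p); in particular T(3p+k) is not divisible by p. -/
/-!
The function `x ↦ (k - 2x)^k` is a polynomial of degree `k` with leading coefficient `(-2)^k`, so
its `k`-th forward difference is `(-2)^k k!`; read off at `0`, this says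
`Σ_j (-1)^j (k - 2j)^k binom(k, j) = 2^k k!`, which is prime to `p`.

Modulo `p`, Fermat reduces the exponent `3p + k - 3 = 3(p - 1) + k` to `k`, and by Lucas
`binom(3p + k, i) ≡ binom(k, i)` and `binom(3p + k, p + i) ≡ 3 binom(k, i)` for `i < p`, the
other terms with `i < 2p` vanishing. As `(-1)^(p + i) = -(-1)^i` and `p + i ≡ i`, the second block
of `T(3p + k)` is `-3` times the first, so `T(3p + k) ≡ (1 - 3) 2^k k!`.
-/

open Finset fwdDiff

section FwdDiff

variable {R : Type*} [CommRing R]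

theorem fwdDiff_iter_sub_mul_pow (a b : R) (n : ℕ) :
    (Δ_[1])^[n] (fun x : R ↦ (a - b * x) ^ n) = fun _ ↦ (-b) ^ n * n.factorial := by
  have expand : (fun x : R ↦ (a - b * x) ^ n) = (-b) ^ n • (fun x : R ↦ x ^ n) +
      fun x ↦ ∑ i ∈ range n, ((-b) ^ i * a ^ (n - i) * n.choose i) * x ^ i := by
    funext x
    rw [sub_eq_add_neg, add_comm, add_pow, sum_range_succ]
    simp only [Pi.add_apply, Pi.smul_apply, smul_eq_mul, Nat.sub_self, pow_zero,
      Nat.choose_self, Nat.cast_one, mul_one]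
    rw [add_comm]
    congr 1
    · ring
    · exact sum_congr rfl fun i _ ↦ by ring
  rw [expand, fwdDiff_iter_add, fwdDiff_iter_const_smul, fwdDiff_iter_eq_factorial,
    fwdDiff_iter_sum_mul_pow_eq_zero, add_zero]
  rfl

theorem sum_range_neg_one_pow_mul_sub_mul_pow_mul_choose (a b : R) {n m : ℕ} (hnm : n < m) :
    ∑ j ∈ range m, (-1) ^ j * (a - b * j) ^ n * n.choose j = b ^ n * n.factorial := by
  have h := congr_fun (fwdDiff_iter_sub_mul_pow a b n) 0
  rw [fwdDiff_iter_eq_sum_shift] at h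
  rw [← sum_subset (range_subset_range.2 hnm) fun j _ hj ↦ by
    rw [Nat.choose_eq_zero_of_lt (by simpa using hj), Nat.cast_zero, mul_zero]]
  have sign : ∀ j ∈ range (n + 1), (-1 : R) ^ j = (-1) ^ n * (-1) ^ (n - j) := fun j hj ↦ by
    rw [← pow_add, show n + (n - j) = j + 2 * (n - j) by grind, pow_add, pow_mul, neg_one_sq,
      one_pow, mul_one]
  calc ∑ j ∈ range (n + 1), (-1) ^ j * (a - b * j) ^ n * n.choose j
      = (-1) ^ n * ∑ j ∈ range (n + 1), ((-1 : ℤ) ^ (n - j) * n.choose j) •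
          (a - b * (0 + j • 1)) ^ n := by
        rw [mul_sum]
        refine sum_congr rfl fun j hj ↦ ?_
        rw [sign j hj, zsmul_eq_mul, nsmul_one]
        push_cast
        ring
    _ = b ^ n * n.factorial := by
        rw [h, ← mul_assoc, ← mul_pow]
        ring

end FwdDiff

theorem ZMod.natCast_choose_mul_add_mul_add {p : ℕ} [Fact p.Prime] {k i : ℕ} (a b : ℕ)
    (hk : k < p) (hi : i < p) :
    (((a * p + k).choose (b * p + i) : ℕ) : ZMod p) = k.choose i * a.choose b := by
  have hp : 0 < p := Nat.pos_of_neZero p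
  have div_eq {c j : ℕ} (hj : j < p) : (c * p + j) / p = c := by
    rw [add_comm, Nat.add_mul_div_right _ _ hp, Nat.div_eq_of_lt hj, zero_add]
  rw [(ZMod.natCast_eq_natCast_iff _ _ _).2 Choose.choose_modEq_choose_mod_mul_choose_div_nat,
    Nat.mul_add_mod_of_lt hk, Nat.mul_add_mod_of_lt hi, div_eq hk, div_eq hi, Nat.cast_mul]

theorem ZMod.pow_mul_card_sub_one_add {p : ℕ} [Fact p.Prime] (x : ZMod p) (m : ℕ) {k : ℕ}
    (hk : k ≠ 0) : x ^ (m * (p - 1) + k) = x ^ k := by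
  rcases eq_or_ne x 0 with rfl | hx
  · rw [zero_pow hk, zero_pow (by omega)]
  · rw [pow_add, pow_mul', ZMod.pow_card_sub_one_eq_one hx, one_pow, one_mul]

/-- The paper's `T(b)`. -/
def altBinomPowSum (b : ℕ) : ℤ :=
  ∑ i ∈ range (b / 2 + 1), (-1) ^ i * ((b : ℤ) - 2 * i) ^ (b - 3) * b.choose i

theorem altBinomPowSum_three_mul_add_cast {p k : ℕ} [Fact p.Prime] (hodd : Odd p) (hk : k ≠ 0)
    (hkp : k < p) :
    (altBinomPowSum (3 * p + k) : ZMod p) = -2 * (2 ^ k * k.factorial) := by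
  obtain ⟨m, hN, hkm, hmp⟩ : ∃ m, (3 * p + k) / 2 + 1 = p + m ∧ k < m ∧ m ≤ p :=
    ⟨(3 * p + k) / 2 + 1 - p, by omega, by omega, by omega⟩
  set term : ℕ → ℤ := fun i ↦
    (-1) ^ i * (((3 * p + k : ℕ) : ℤ) - 2 * i) ^ (3 * p + k - 3) * (3 * p + k).choose i
  set t : ℕ → ZMod p := fun i ↦ (-1) ^ i * ((k : ZMod p) - 2 * i) ^ k * k.choose i
  have cast_term (i : ℕ) : (term i : ZMod p) =
      (-1) ^ i * ((k : ZMod p) - 2 * i) ^ k * ((3 * p + k).choose i : ℕ) := by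
    have cast_b : ((3 * p + k : ℕ) : ZMod p) = k := by simp
    simp only [term]
    rw [show 3 * p + k - 3 = 3 * (p - 1) + k by omega]
    simp only [Int.cast_mul, Int.cast_pow, Int.cast_sub, Int.cast_neg, Int.cast_one,
      Int.cast_ofNat, Int.cast_natCast, cast_b, ZMod.pow_mul_card_sub_one_add _ 3 hk]
  have low : ∀ i ∈ range p, (term i : ZMod p) = t i := fun i hi ↦ by
    have := ZMod.natCast_choose_mul_add_mul_add 3 0 hkp (mem_range.1 hi)
    rw [zero_mul, zero_add] at this
    rw [cast_term, this, Nat.choose_zero_right, Nat.cast_one, mul_one]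
  have high : ∀ i ∈ range m, (term (p + i) : ZMod p) = -3 * t i := fun i hi ↦ by
    have := ZMod.natCast_choose_mul_add_mul_add 3 1 hkp ((mem_range.1 hi).trans_le hmp)
    rw [one_mul] at this
    rw [cast_term, this, pow_add, hodd.neg_one_pow, Nat.cast_add, ZMod.natCast_self, zero_add,
      Nat.choose_one_right]
    push_cast
    ring
  rw [altBinomPowSum, Int.cast_sum, hN, sum_range_add, sum_congr rfl low, sum_congr rfl high,
    ← mul_sum, sum_range_neg_one_pow_mul_sub_mul_pow_mul_choose _ _ hkp,
    sum_range_neg_one_pow_mul_sub_mul_pow_mul_choose _ _ hkm]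
  ring

theorem ZMod.two_ne_zero_of_odd {p : ℕ} [Fact (1 < p)] (hodd : Odd p) : (2 : ZMod p) ≠ 0 :=
  Ring.two_ne_zero (by rw [ZMod.ringChar_zmod_n]; rintro rfl; exact absurd hodd (by decide))

theorem ZMod.natCast_factorial_ne_zero {p : ℕ} [hp : Fact p.Prime] {k : ℕ} (hkp : k < p) :
    (k.factorial : ZMod p) ≠ 0 := by
  rw [Ne, ZMod.natCast_eq_zero_iff, hp.out.dvd_factorial, not_le]
  exact hkp

/-- Let `p` be an odd prime and `1 ≤ k < p`, and set `b = 3p + k`.  Then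
`T(b) = Σ_{i=0}^{⌊b/2⌋} (-1)^i (b-2i)^(b-3) binom(b,i)` satisfies
`T(b) ≡ -2·Σ_{j=0}^k (-1)^j (k-2j)^k binom(k,j)  (mod p)`;
in particular `p` does not divide `T(3p+k)`. -/
theorem stmt15 (p k : ℕ) (hp : p.Prime) (hodd : Odd p) (hk1 : 1 ≤ k) (hkp : k < p) :
    ((p : ℤ) ∣
      (∑ i ∈ Finset.range ((3 * p + k) / 2 + 1),
          (-1 : ℤ) ^ i * (((3 * p + k : ℕ) : ℤ) - 2 * i) ^ (3 * p + k - 3) *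
            (Nat.choose (3 * p + k) i : ℤ)
        + 2 * ∑ j ∈ Finset.range (k + 1),
            (-1 : ℤ) ^ j * ((k : ℤ) - 2 * j) ^ k * (Nat.choose k j : ℤ))) ∧
    ¬ ((p : ℤ) ∣
      ∑ i ∈ Finset.range ((3 * p + k) / 2 + 1),
        (-1 : ℤ) ^ i * (((3 * p + k : ℕ) : ℤ) - 2 * i) ^ (3 * p + k - 3) *
          (Nat.choose (3 * p + k) i : ℤ)) := by
  have : Fact p.Prime := ⟨hp⟩
  change (p : ℤ) ∣ altBinomPowSum (3 * p + k) + 2 * _ ∧ ¬(p : ℤ) ∣ altBinomPowSum (3 * p + k)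
  rw [sum_range_neg_one_pow_mul_sub_mul_pow_mul_choose _ _ (Nat.lt_succ_self k),
    ← ZMod.intCast_zmod_eq_zero_iff_dvd, ← ZMod.intCast_zmod_eq_zero_iff_dvd]
  push_cast
  rw [altBinomPowSum_three_mul_add_cast hodd (Nat.one_le_iff_ne_zero.1 hk1) hkp]
  refine ⟨by ring, ?_⟩
  have two_ne_zero := ZMod.two_ne_zero_of_odd hodd
  exact mul_ne_zero (neg_ne_zero.2 two_ne_zero)
    (mul_ne_zero (pow_ne_zero k two_ne_zero) (ZMod.natCast_factorial_ne_zero hkp))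
end

section
/- Let λ be a partition of length b and n > |λ| − λ_b. Then the number of partitions μ ⊆ λ with |μ| = n is at most the number of partitions ν ⊆ λ with |ν| = n − 1. Hence the coefficients of G_λ(q) are weakly decreasing from index |λ| − λ_b onward. -/
/-!
Lowering the last part, `μ ↦ (μ₁, …, μ_{b-1}, μ_b - 1)`, injects the partitions of size `n`
inside `λ` into those of size `n - 1`: the first `b - 1` parts of `μ` contribute at most
`|λ| - λ_b`, so `|μ| > |λ| - λ_b` forces `μ_b ≥ 1`, and lowering the last part of an antitone
sequence keeps it antitone. Chaining these steps gives the monotonicity from `|λ| - λ_b` on.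
-/

open scoped Classical

open Finset Function

theorem apply_pos_of_sum_sub_lt_sum {ι : Type*} [Fintype ι] {f g : ι → ℕ} (hfg : f ≤ g) (i : ι)
    (h : ∑ j, g j - g i < ∑ j, f j) : 0 < f i := by
  by_contra! hi
  have : ∑ j, f j ≤ ∑ j, g j - g i := by
    rw [← add_sum_erase _ f (mem_univ i), ← add_sum_erase _ g (mem_univ i), Nat.le_zero.1 hi,
      zero_add, Nat.add_sub_cancel_left]
    exact sum_le_sum fun j _ => hfg j
  omega

theorem sum_update_pred {ι : Type*} [Fintype ι] [DecidableEq ι] (f : ι → ℕ) {i : ι}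
    (hi : 0 < f i) : ∑ j, update f i (f i - 1) j = ∑ j, f j - 1 := by
  rw [sum_update_of_mem (mem_univ i), sdiff_singleton_eq_erase, ← add_sum_erase _ f (mem_univ i)]
  omega

theorem Antitone.update_of_isTop {ι α : Type*} [PartialOrder ι] [DecidableEq ι] [Preorder α]
    {f : ι → α} (hf : Antitone f) {i : ι} (hi : IsTop i) {a : α} (ha : a ≤ f i) :
    Antitone (update f i a) := by
  intro j k hjk
  rcases eq_or_ne k i with rfl | hk
  · rcases eq_or_ne j k with rfl | hj
    · rfl
    · rw [update_self, update_of_ne hj]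
      exact ha.trans (hf hjk)
  · have hj : j ≠ i := by
      rintro rfl
      exact hk (le_antisymm (hi k) hjk)
    rw [update_of_ne hk, update_of_ne hj]
    exact hf hjk

theorem update_pred_injOn {ι : Type*} [DecidableEq ι] (i : ι) :
    Set.InjOn (fun f : ι → ℕ => update f i (f i - 1)) {f | 0 < f i} := by
  intro f (hf : 0 < f i) g (hg : 0 < g i) hfg
  ext k
  have hk := congrFun hfg k
  rcases eq_or_ne k i with rfl | hki
  · simp only [update_self] at hk
    omega
  · simpa [hki] using hk

noncomputable def subPartitions (b : ℕ) (lam : ℕ → ℕ) (n : ℕ) : Finset (Fin b → ℕ) :=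
  (Fintype.piFinset fun k : Fin b => range (lam k + 1)).filter
    (fun mu => (∀ j k : Fin b, j ≤ k → mu k ≤ mu j) ∧ (∑ k : Fin b, mu k) = n)

theorem subCount_eq_card (b : ℕ) (lam : ℕ → ℕ) (n : ℕ) :
    subCount b lam n = #(subPartitions b lam n) := rfl

theorem mem_subPartitions {b : ℕ} {lam : ℕ → ℕ} {n : ℕ} {mu : Fin b → ℕ} :
    mu ∈ subPartitions b lam n ↔ (mu ≤ fun k : Fin b => lam k) ∧ Antitone mu ∧ ∑ k, mu k = n := by
  simp [subPartitions, Fintype.mem_piFinset, Antitone, Pi.le_def]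

theorem subCount_eq_zero_of_sum_lt {b : ℕ} {lam : ℕ → ℕ} {n : ℕ}
    (hn : ∑ i ∈ range b, lam i < n) : subCount b lam n = 0 := by
  rw [subCount_eq_card, card_eq_zero, eq_empty_iff_forall_notMem]
  intro mu hmu
  obtain ⟨hle, -, rfl⟩ := mem_subPartitions.1 hmu
  rw [← Fin.sum_univ_eq_sum_range] at hn
  exact (sum_le_sum fun k _ => hle k).not_gt hn

theorem subCount_le_subCount_pred (b : ℕ) (lam : ℕ → ℕ) {n : ℕ}
    (hn : ∑ i ∈ range (b + 1), lam i - lam b < n) :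
    subCount (b + 1) lam n ≤ subCount (b + 1) lam (n - 1) := by
  have hpos : ∀ mu ∈ subPartitions (b + 1) lam n, 0 < mu (Fin.last b) := by
    intro mu hmu
    obtain ⟨hle, -, rfl⟩ := mem_subPartitions.1 hmu
    refine apply_pos_of_sum_sub_lt_sum hle _ ?_
    simpa [Fin.sum_univ_eq_sum_range] using hn
  rw [subCount_eq_card, subCount_eq_card]
  refine card_le_card_of_injOn (fun mu => update mu (Fin.last b) (mu (Fin.last b) - 1)) ?_
    ((update_pred_injOn _).mono hpos)
  intro mu hmu
  have hlast := hpos mu hmu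
  obtain ⟨hle, hanti, rfl⟩ := mem_subPartitions.1 hmu
  refine mem_subPartitions.2 ⟨?_, hanti.update_of_isTop Fin.le_last (Nat.sub_le _ _),
    sum_update_pred mu hlast⟩
  exact update_le_iff.2 ⟨(Nat.sub_le _ _).trans (hle _), fun k _ => hle k⟩

theorem stmt17_general (b : ℕ) (lam : ℕ → ℕ) :
    (∀ n, (∑ i ∈ Finset.range b, lam i) - lam (b - 1) < n →
        subCount b lam n ≤ subCount b lam (n - 1)) ∧
    (∀ n m, (∑ i ∈ Finset.range b, lam i) - lam (b - 1) ≤ n → n ≤ m →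
        subCount b lam m ≤ subCount b lam n) := by
  have step : ∀ n, ∑ i ∈ range b, lam i - lam (b - 1) < n →
      subCount b lam n ≤ subCount b lam (n - 1) := by
    intro n hn
    cases b with
    | zero =>
      rw [subCount_eq_zero_of_sum_lt (by simpa using hn)]
      exact Nat.zero_le _
    | succ b => exact subCount_le_subCount_pred b lam (by simpa using hn)
  exact ⟨step, fun n m hn hnm =>
    antitoneOn_nat_Ici_of_succ_le (fun k hk => step (k + 1) (by omega)) hn (hn.trans hnm) hnm⟩

/-- Let `λ` be a partition of length `b` (with positive parts).  For every
`n > |λ| - λ_b`, the number of partitions `μ ⊆ λ` of size `n` is at most the number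
of partitions of size `n - 1`; hence the coefficients of `G_λ(q)` are weakly
decreasing from index `|λ| - λ_b` onward. -/
theorem stmt17 (b : ℕ) (hb : 0 < b) (lam : ℕ → ℕ)
    (hanti : ∀ i j, i ≤ j → j < b → lam j ≤ lam i)
    (hpos : 0 < lam (b - 1)) :
    (∀ n, (∑ i ∈ Finset.range b, lam i) - lam (b - 1) < n →
        subCount b lam n ≤ subCount b lam (n - 1)) ∧
    (∀ n m, (∑ i ∈ Finset.range b, lam i) - lam (b - 1) ≤ n → n ≤ m →
        subCount b lam m ≤ subCount b lam n) :=
  stmt17_general b lam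
end

section
/- There exist infinitely many partitions λ with 4 parts such that G_λ(q) is not unimodal; in fact, for λ = (12m−1, 12n−1, λ₃, λ₄) with λ₄ > 0.9·λ₁, 1.999m < ℓ < 1.9999m, 0.98m < n < ℓ−m, m sufficiently large, and N = 12(ℓ−1) with λ₁+λ₂+14 ≤ N < 2λ₁+2, if the coefficient of q^{N+1} in (1−q)G_λ(q) equals 9ℓ² − (48m+15)ℓ + 24m² + 72mn − 36n² + 38m + 6 is negative and the coefficient of q^{N+2}, equal to 9ℓ² − (48m+15)ℓ + 24m² + 72mn − 36n² + 34m + 6n + 6, is positive, then G_λ is not unimodal at N+1. -/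
open scoped Classical

/-- A sequence is unimodal: it weakly increases up to some index `m` and
weakly decreases from `m` on. -/
def IsUnimodal (a : ℕ → ℕ) : Prop :=
  ∃ m : ℕ, (∀ i j, i ≤ j → j ≤ m → a i ≤ a j) ∧ (∀ i j, m ≤ i → i ≤ j → a j ≤ a i)

open Finset

def ww (b t : ℕ) : ℕ := min b t + 1 - (t+1)/2

lemma pair_card (b t : ℕ) :
    (((range (b+1)) ×ˢ (range (b+1))).filter
      (fun p => p.2 ≤ p.1 ∧ p.1 + p.2 = t)).card = ww b t := by
  have himg : (((range (b+1)) ×ˢ (range (b+1))).filter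
      (fun p => p.2 ≤ p.1 ∧ p.1 + p.2 = t))
      = (Finset.Icc ((t+1)/2) (min b t)).image (fun c => (c, t - c)) := by
    ext ⟨c, d⟩
    simp only [mem_filter, mem_product, mem_range, mem_image, Finset.mem_Icc]
    constructor
    · rintro ⟨⟨h1, h2⟩, h3, h4⟩
      refine ⟨c, ⟨by omega, by omega⟩, ?_⟩
      rw [Prod.mk.injEq]
      omega
    · rintro ⟨x, ⟨hx1, hx2⟩, hxe⟩
      rw [Prod.mk.injEq] at hxe
      omega
  rw [himg, Finset.card_image_of_injective _ (fun x y h => by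
    simpa using congrArg Prod.fst h), Nat.card_Icc]
  rfl


lemma Hlin (c K : ℕ) : 2 * (∑ i ∈ range K, (c + i)) + K = 2*K*c + K*K := by
  induction K with
  | zero => simp
  | succ K ih =>
    rw [Finset.sum_range_succ, show (K+1)*(K+1) = K*K + 2*K + 1 from by ring,
      show 2*(K+1)*c = 2*K*c + 2*c from by ring]
    omega

lemma Heven (K : ℕ) : ∑ i ∈ range K, (2*i + 2) = K*K + K := by
  induction K with
  | zero => simp
  | succ K ih =>
    rw [Finset.sum_range_succ, show (K+1)*(K+1) = K*K + 2*K + 1 from by ring]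
    omega

lemma Hhalf (c K : ℕ) : 4 * (∑ i ∈ range K, ((c + i)/2)) + 2*(c+K) + c*c + c%2
    = (c+K)*(c+K) + (c+K)%2 + 2*c := by
  induction K with
  | zero => simp; omega
  | succ K ih =>
    rw [Finset.sum_range_succ, show (c+(K+1))*(c+(K+1)) = (c+K)*(c+K) + 2*(c+K) + 1 from by ring,
      show c + (K+1) = (c+K)+1 from by ring]
    omega

lemma Hdesc (c K : ℕ) : 2 * (∑ i ∈ range K, (c + (K - 1 - i))) + K = 2*K*c + K*K := by
  rw [Finset.sum_range_reflect (fun j => c + j) K]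
  exact Hlin c K

lemma Hdeschalf (a K : ℕ) : 4 * (∑ i ∈ range K, ((a + (K - 1 - i))/2)) + 2*(a+K) + a*a + a%2
    = (a+K)*(a+K) + (a+K)%2 + 2*a := by
  rw [Finset.sum_range_reflect (fun j => (a + j)/2) K]
  exact Hhalf a K

lemma S1odd_eval (n ℓ J c : ℕ) (hJ : 12*n + 3 = 4*ℓ + J) (hc : 2*ℓ = J + c + 1)
    (h2 : 12*n + 24 ≤ 6*ℓ) :
    4 * (∑ b ∈ range (12*n), (ww b (12*ℓ - 11 - 2*b) : ℤ))
      = -60*(ℓ:ℤ)^2 + 288*(ℓ:ℤ)*(n:ℤ) - 288*(n:ℤ)^2 + 92*(ℓ:ℤ) - 216*(n:ℤ) - 36 := by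
  have hl : 12 ≤ ℓ := by omega
  rw [range_eq_Ico,
    ← Finset.sum_Ico_consecutive _ (show (0:ℕ) ≤ 3*ℓ-2 by omega) (show 3*ℓ-2 ≤ 12*n by omega),
    ← Finset.sum_Ico_consecutive _ (show 3*ℓ-2 ≤ 4*ℓ-3 by omega) (show 4*ℓ-3 ≤ 12*n by omega)]
  have hz : ∑ b ∈ Finset.Ico 0 (3*ℓ-2), (ww b (12*ℓ - 11 - 2*b) : ℤ) = 0 := by
    refine Finset.sum_eq_zero (fun b hb => ?_)
    rw [Finset.mem_Ico] at hb
    have : ww b (12*ℓ - 11 - 2*b) = 0 := by unfold ww; omega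
    rw [this]; rfl
  have hI : ∑ b ∈ Finset.Ico (3*ℓ-2) (4*ℓ-3), (ww b (12*ℓ - 11 - 2*b) : ℤ)
      = ((∑ i ∈ range (ℓ-1), (2*i+2) : ℕ) : ℤ) := by
    rw [Finset.sum_Ico_eq_sum_range, show 4*ℓ-3 - (3*ℓ-2) = ℓ-1 from by omega, Nat.cast_sum]
    refine Finset.sum_congr rfl (fun i hi => ?_)
    rw [mem_range] at hi
    have : ww (3*ℓ-2+i) (12*ℓ - 11 - 2*(3*ℓ-2+i)) = 2*i+2 := by unfold ww; omega
    rw [this]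
  have hII : ∑ b ∈ Finset.Ico (4*ℓ-3) (12*n), (ww b (12*ℓ - 11 - 2*b) : ℤ)
      = ((∑ i ∈ range J, (c + (J - 1 - i)) : ℕ) : ℤ) := by
    rw [Finset.sum_Ico_eq_sum_range, show 12*n - (4*ℓ-3) = J from by omega, Nat.cast_sum]
    refine Finset.sum_congr rfl (fun i hi => ?_)
    rw [mem_range] at hi
    have : ww (4*ℓ-3+i) (12*ℓ - 11 - 2*(4*ℓ-3+i)) = c + (J - 1 - i) := by unfold ww; omega
    rw [this]
  rw [hz, hI, hII, zero_add]
  have e1 : ((∑ i ∈ range (ℓ-1), (2*i+2) : ℕ) : ℤ) = ((ℓ:ℤ)-1)*((ℓ:ℤ)-1) + ((ℓ:ℤ)-1) := by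
    rw [Heven]
    push_cast [show (1:ℕ) ≤ ℓ by omega]
    ring
  have e2 : 2 * ((∑ i ∈ range J, (c + (J - 1 - i)) : ℕ) : ℤ) + (J:ℤ)
      = 2*(J:ℤ)*(c:ℤ) + (J:ℤ)*(J:ℤ) := by exact_mod_cast congrArg (Nat.cast : ℕ → ℤ) (Hdesc c J)
  have hJz : (J:ℤ) = 12*(n:ℤ) + 3 - 4*(ℓ:ℤ) := by omega
  have hcz : (c:ℤ) = 6*(ℓ:ℤ) - 4 - 12*(n:ℤ) := by omega
  rw [hJz, hcz] at e2
  linear_combination 4*e1 + 2*e2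

lemma Hid (K : ℕ) : 2 * (∑ i ∈ range K, i) + K = K*K := by
  have := Hlin 0 K
  simp only [Nat.zero_add, Nat.mul_zero, zero_add] at this
  omega

lemma S1even_eval (n ℓ J c : ℕ) (hJ : 12*n + 3 = 4*ℓ + J) (hc : 2*ℓ = J + c)
    (h2 : 12*n + 24 ≤ 6*ℓ) :
    4 * (∑ b ∈ range (12*n), (ww b (12*ℓ - 10 - 2*b) : ℤ))
      = -60*(ℓ:ℤ)^2 + 288*(ℓ:ℤ)*(n:ℤ) - 288*(n:ℤ)^2 + 76*(ℓ:ℤ) - 168*(n:ℤ) - 24 := by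
  have hl : 12 ≤ ℓ := by omega
  rw [range_eq_Ico,
    ← Finset.sum_Ico_consecutive _ (show (0:ℕ) ≤ 3*ℓ-2 by omega) (show 3*ℓ-2 ≤ 12*n by omega),
    ← Finset.sum_Ico_consecutive _ (show 3*ℓ-2 ≤ 4*ℓ-3 by omega) (show 4*ℓ-3 ≤ 12*n by omega)]
  have hz : ∑ b ∈ Finset.Ico 0 (3*ℓ-2), (ww b (12*ℓ - 10 - 2*b) : ℤ) = 0 := by
    refine Finset.sum_eq_zero (fun b hb => ?_)
    rw [Finset.mem_Ico] at hb
    have : ww b (12*ℓ - 10 - 2*b) = 0 := by unfold ww; omega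
    rw [this]; rfl
  have hI : ∑ b ∈ Finset.Ico (3*ℓ-2) (4*ℓ-3), (ww b (12*ℓ - 10 - 2*b) : ℤ)
      = ((∑ i ∈ range (ℓ-1), (2*i+2) : ℕ) : ℤ) := by
    rw [Finset.sum_Ico_eq_sum_range, show 4*ℓ-3 - (3*ℓ-2) = ℓ-1 from by omega, Nat.cast_sum]
    refine Finset.sum_congr rfl (fun i hi => ?_)
    rw [mem_range] at hi
    have : ww (3*ℓ-2+i) (12*ℓ - 10 - 2*(3*ℓ-2+i)) = 2*i+2 := by unfold ww; omega
    rw [this]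
  have hII : ∑ b ∈ Finset.Ico (4*ℓ-3) (12*n), (ww b (12*ℓ - 10 - 2*b) : ℤ)
      = ((∑ i ∈ range J, (c + (J - 1 - i)) : ℕ) : ℤ) := by
    rw [Finset.sum_Ico_eq_sum_range, show 12*n - (4*ℓ-3) = J from by omega, Nat.cast_sum]
    refine Finset.sum_congr rfl (fun i hi => ?_)
    rw [mem_range] at hi
    have : ww (4*ℓ-3+i) (12*ℓ - 10 - 2*(4*ℓ-3+i)) = c + (J - 1 - i) := by unfold ww; omega
    rw [this]
  rw [hz, hI, hII, zero_add]
  have e1 : ((∑ i ∈ range (ℓ-1), (2*i+2) : ℕ) : ℤ) = ((ℓ:ℤ)-1)*((ℓ:ℤ)-1) + ((ℓ:ℤ)-1) := by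
    rw [Heven]
    push_cast [show (1:ℕ) ≤ ℓ by omega]
    ring
  have e2 : 2 * ((∑ i ∈ range J, (c + (J - 1 - i)) : ℕ) : ℤ) + (J:ℤ)
      = 2*(J:ℤ)*(c:ℤ) + (J:ℤ)*(J:ℤ) := by exact_mod_cast congrArg (Nat.cast : ℕ → ℤ) (Hdesc c J)
  have hJz : (J:ℤ) = 12*(n:ℤ) + 3 - 4*(ℓ:ℤ) := by omega
  have hcz : (c:ℤ) = 6*(ℓ:ℤ) - 3 - 12*(n:ℤ) := by omega
  rw [hJz, hcz] at e2
  linear_combination 4*e1 + 2*e2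

lemma S2odd_eval (r n a J2 : ℕ) (hr : n + 2 ≤ r) (h6 : 6*r ≤ 12*n + 5)
    (ha : 12*r = 12*n + a + 10) (hJ2 : 12*n + 5 = 6*r + J2) :
    4 * (∑ b ∈ range (12*n), (ww b (12*r - 11 - b) : ℤ))
      = -96*(r:ℤ)^2 + 288*(r:ℤ)*(n:ℤ) - 144*(n:ℤ)^2 + 152*(r:ℤ) - 216*(n:ℤ) - 60 := by
  have hn : 1 ≤ n := by omega
  rw [range_eq_Ico,
    ← Finset.sum_Ico_consecutive _ (show (0:ℕ) ≤ 4*r-3 by omega) (show 4*r-3 ≤ 12*n by omega),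
    ← Finset.sum_Ico_consecutive _ (show 4*r-3 ≤ 6*r-5 by omega) (show 6*r-5 ≤ 12*n by omega)]
  have hz : ∑ b ∈ Finset.Ico 0 (4*r-3), (ww b (12*r - 11 - b) : ℤ) = 0 := by
    refine Finset.sum_eq_zero (fun b hb => ?_)
    rw [Finset.mem_Ico] at hb
    have : ww b (12*r - 11 - b) = 0 := by unfold ww; omega
    rw [this]; rfl
  have hI : ∑ b ∈ Finset.Ico (4*r-3) (6*r-5), (ww b (12*r - 11 - b) : ℤ)
      = ((∑ i ∈ range (2*r-2), (i + (4+i)/2) : ℕ) : ℤ) := by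
    rw [Finset.sum_Ico_eq_sum_range, show 6*r-5 - (4*r-3) = 2*r-2 from by omega, Nat.cast_sum]
    refine Finset.sum_congr rfl (fun i hi => ?_)
    rw [mem_range] at hi
    have : ww (4*r-3+i) (12*r - 11 - (4*r-3+i)) = i + (4+i)/2 := by unfold ww; omega
    rw [this]
  have hII : ∑ b ∈ Finset.Ico (6*r-5) (12*n), (ww b (12*r - 11 - b) : ℤ)
      = ((∑ i ∈ range J2, ((a + (J2 - 1 - i))/2 + 1) : ℕ) : ℤ) := by
    rw [Finset.sum_Ico_eq_sum_range, show 12*n - (6*r-5) = J2 from by omega, Nat.cast_sum]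
    refine Finset.sum_congr rfl (fun i hi => ?_)
    rw [mem_range] at hi
    have : ww (6*r-5+i) (12*r - 11 - (6*r-5+i)) = (a + (J2 - 1 - i))/2 + 1 := by unfold ww; omega
    rw [this]
  rw [hz, hI, hII, zero_add]
  have eI : 4 * ((∑ i ∈ range (2*r-2), (i + (4+i)/2) : ℕ) : ℤ)
      = 12*(r:ℤ)*(r:ℤ) - 16*(r:ℤ) + 4 := by
    rw [Finset.sum_add_distrib, Nat.cast_add]
    have g1 := Hid (2*r-2)
    have g2 := Hhalf 4 (2*r-2)
    rw [show (4 + (2*r-2)) % 2 = 0 from by omega, show (4:ℕ) % 2 = 0 from by omega] at g2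
    have g1z : 2 * ((∑ i ∈ range (2*r-2), i : ℕ) : ℤ) + ((2*r-2 : ℕ) : ℤ)
        = ((2*r-2 : ℕ) : ℤ) * ((2*r-2 : ℕ) : ℤ) := by exact_mod_cast congrArg (Nat.cast : ℕ → ℤ) g1
    have g2z : 4 * ((∑ i ∈ range (2*r-2), (4+i)/2 : ℕ) : ℤ) + 2*(4 + ((2*r-2 : ℕ) : ℤ)) + 16
        = (4 + ((2*r-2 : ℕ) : ℤ)) * (4 + ((2*r-2 : ℕ) : ℤ)) + 8 := by
      exact_mod_cast congrArg (Nat.cast : ℕ → ℤ) g2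
    have hcast : ((2*r-2 : ℕ) : ℤ) = 2*(r:ℤ) - 2 := by omega
    rw [hcast] at g1z g2z
    linear_combination 2*g1z + g2z
  have eII : 4 * ((∑ i ∈ range J2, ((a + (J2 - 1 - i))/2 + 1) : ℕ) : ℤ)
      = (6*(r:ℤ)-5)*(6*(r:ℤ)-5) + 1 + 2*(a:ℤ) - 2*(6*(r:ℤ)-5) - (a:ℤ)*(a:ℤ)
        + 4*(J2:ℤ) := by
    rw [Finset.sum_add_distrib, Finset.sum_const, Finset.card_range, smul_eq_mul, mul_one,
      Nat.cast_add]
    have g3 := Hdeschalf a J2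
    rw [show a % 2 = 0 from by omega, show (a + J2) % 2 = 1 from by omega] at g3
    have g3z : 4 * ((∑ i ∈ range J2, (a + (J2 - 1 - i))/2 : ℕ) : ℤ) + 2*((a:ℤ) + (J2:ℤ)) + (a:ℤ)*(a:ℤ)
        = ((a:ℤ)+(J2:ℤ)) * ((a:ℤ)+(J2:ℤ)) + 1 + 2*(a:ℤ) := by
      exact_mod_cast congrArg (Nat.cast : ℕ → ℤ) g3
    have haJ : (a:ℤ) + (J2:ℤ) = 6*(r:ℤ) - 5 := by omega
    rw [haJ] at g3z
    linear_combination g3z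
  have haz : (a:ℤ) = 12*(r:ℤ) - 12*(n:ℤ) - 10 := by omega
  have hJ2z : (J2:ℤ) = 12*(n:ℤ) + 5 - 6*(r:ℤ) := by omega
  rw [haz, hJ2z] at eII
  linear_combination eI + eII

lemma S2even_eval (r n a J2 : ℕ) (hr : n + 2 ≤ r) (h6 : 6*r ≤ 12*n + 5)
    (ha : 12*r = 12*n + a + 9) (hJ2 : 12*n + 4 = 6*r + J2) :
    4 * (∑ b ∈ range (12*n), (ww b (12*r - 10 - b) : ℤ))
      = -96*(r:ℤ)^2 + 288*(r:ℤ)*(n:ℤ) - 144*(n:ℤ)^2 + 136*(r:ℤ) - 192*(n:ℤ) - 48 := by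
  have hn : 1 ≤ n := by omega
  rw [range_eq_Ico,
    ← Finset.sum_Ico_consecutive _ (show (0:ℕ) ≤ 4*r-3 by omega) (show 4*r-3 ≤ 12*n by omega),
    ← Finset.sum_Ico_consecutive _ (show 4*r-3 ≤ 6*r-4 by omega) (show 6*r-4 ≤ 12*n by omega)]
  have hz : ∑ b ∈ Finset.Ico 0 (4*r-3), (ww b (12*r - 10 - b) : ℤ) = 0 := by
    refine Finset.sum_eq_zero (fun b hb => ?_)
    rw [Finset.mem_Ico] at hb
    have : ww b (12*r - 10 - b) = 0 := by unfold ww; omega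
    rw [this]; rfl
  have hI : ∑ b ∈ Finset.Ico (4*r-3) (6*r-4), (ww b (12*r - 10 - b) : ℤ)
      = ((∑ i ∈ range (2*r-1), (i + (3+i)/2) : ℕ) : ℤ) := by
    rw [Finset.sum_Ico_eq_sum_range, show 6*r-4 - (4*r-3) = 2*r-1 from by omega, Nat.cast_sum]
    refine Finset.sum_congr rfl (fun i hi => ?_)
    rw [mem_range] at hi
    have : ww (4*r-3+i) (12*r - 10 - (4*r-3+i)) = i + (3+i)/2 := by unfold ww; omega
    rw [this]
  have hII : ∑ b ∈ Finset.Ico (6*r-4) (12*n), (ww b (12*r - 10 - b) : ℤ)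
      = ((∑ i ∈ range J2, ((a + (J2 - 1 - i))/2 + 1) : ℕ) : ℤ) := by
    rw [Finset.sum_Ico_eq_sum_range, show 12*n - (6*r-4) = J2 from by omega, Nat.cast_sum]
    refine Finset.sum_congr rfl (fun i hi => ?_)
    rw [mem_range] at hi
    have : ww (6*r-4+i) (12*r - 10 - (6*r-4+i)) = (a + (J2 - 1 - i))/2 + 1 := by unfold ww; omega
    rw [this]
  rw [hz, hI, hII, zero_add]
  have eI : 4 * ((∑ i ∈ range (2*r-1), (i + (3+i)/2) : ℕ) : ℤ)
      = 12*(r:ℤ)*(r:ℤ) - 8*(r:ℤ) := by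
    rw [Finset.sum_add_distrib, Nat.cast_add]
    have g1 := Hid (2*r-1)
    have g2 := Hhalf 3 (2*r-1)
    rw [show (3 + (2*r-1)) % 2 = 0 from by omega, show (3:ℕ) % 2 = 1 from by omega] at g2
    have g1z : 2 * ((∑ i ∈ range (2*r-1), i : ℕ) : ℤ) + ((2*r-1 : ℕ) : ℤ)
        = ((2*r-1 : ℕ) : ℤ) * ((2*r-1 : ℕ) : ℤ) := by exact_mod_cast congrArg (Nat.cast : ℕ → ℤ) g1
    have g2z : 4 * ((∑ i ∈ range (2*r-1), (3+i)/2 : ℕ) : ℤ) + 2*(3 + ((2*r-1 : ℕ) : ℤ)) + 9 + 1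
        = (3 + ((2*r-1 : ℕ) : ℤ)) * (3 + ((2*r-1 : ℕ) : ℤ)) + 6 := by
      exact_mod_cast congrArg (Nat.cast : ℕ → ℤ) g2
    have hcast : ((2*r-1 : ℕ) : ℤ) = 2*(r:ℤ) - 1 := by omega
    rw [hcast] at g1z g2z
    linear_combination 2*g1z + g2z
  have eII : 4 * ((∑ i ∈ range J2, ((a + (J2 - 1 - i))/2 + 1) : ℕ) : ℤ)
      = (6*(r:ℤ)-5)*(6*(r:ℤ)-5) + 1 + 2*(a:ℤ) - 2*(6*(r:ℤ)-5) - (a:ℤ)*(a:ℤ) - 1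
        + 4*(J2:ℤ) := by
    rw [Finset.sum_add_distrib, Finset.sum_const, Finset.card_range, smul_eq_mul, mul_one,
      Nat.cast_add]
    have g3 := Hdeschalf a J2
    rw [show a % 2 = 1 from by omega, show (a + J2) % 2 = 1 from by omega] at g3
    have g3z : 4 * ((∑ i ∈ range J2, (a + (J2 - 1 - i))/2 : ℕ) : ℤ) + 2*((a:ℤ) + (J2:ℤ)) + (a:ℤ)*(a:ℤ) + 1
        = ((a:ℤ)+(J2:ℤ)) * ((a:ℤ)+(J2:ℤ)) + 1 + 2*(a:ℤ) := by
      exact_mod_cast congrArg (Nat.cast : ℕ → ℤ) g3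
    have haJ : (a:ℤ) + (J2:ℤ) = 6*(r:ℤ) - 5 := by omega
    rw [haJ] at g3z
    linear_combination g3z
  have haz : (a:ℤ) = 12*(r:ℤ) - 12*(n:ℤ) - 9 := by omega
  have hJ2z : (J2:ℤ) = 12*(n:ℤ) + 4 - 6*(r:ℤ) := by omega
  rw [haz, hJ2z] at eII
  linear_combination eI + eII

lemma count_eq (lam : ℕ → ℕ) (s : ℕ)
    (hdec : ∀ i j, i ≤ j → j < 4 → lam j ≤ lam i)
    (hs1 : lam 0 + lam 1 + 1 ≤ s)
    (hs2 : s + 1 ≤ 3 * lam 3 + 3) :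
    subCount 4 lam s
      = ∑ b ∈ range (lam 1 + 1), ∑ a ∈ Finset.Ico b (lam 0 + 1), ww b (s - a - b) := by
  have key : subCount 4 lam s
      = ((range (lam 1 + 1)).sigma (fun b => (Finset.Ico b (lam 0 + 1)).sigma
          (fun a => ((range (b+1)) ×ˢ (range (b+1))).filter
            (fun p => p.2 ≤ p.1 ∧ p.1 + p.2 = s - a - b)))).card := by
    unfold subCount
    apply Finset.card_bij' (fun mu _ => (⟨mu 1, mu 0, mu 2, mu 3⟩ :
        (_ : ℕ) × (_ : ℕ) × ℕ × ℕ))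
      (fun x _ => ![x.2.1, x.1, x.2.2.1, x.2.2.2])
    · -- forward membership
      intro mu hmu
      simp only [mem_filter, Fintype.mem_piFinset, mem_range] at hmu
      obtain ⟨hbox, hmono, hsum⟩ := hmu
      rw [Fin.sum_univ_four] at hsum
      have h01 : mu 1 ≤ mu 0 := hmono 0 1 (by decide)
      have h12 : mu 2 ≤ mu 1 := hmono 1 2 (by decide)
      have h23 : mu 3 ≤ mu 2 := hmono 2 3 (by decide)
      have hb0 : mu 0 < lam 0 + 1 := by simpa using hbox 0
      have hb1 : mu 1 < lam 1 + 1 := by simpa using hbox 1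
      simp only [Finset.mem_sigma, mem_range, Finset.mem_Ico, mem_filter, mem_product]
      refine ⟨by omega, by omega, ⟨by omega, by omega⟩, by omega, by omega⟩
    · -- backward membership
      intro x hx
      obtain ⟨b, a, c, d⟩ := x
      simp only [Finset.mem_sigma, mem_range, Finset.mem_Ico, mem_filter, mem_product] at hx
      obtain ⟨hb, ⟨hba, ha⟩, ⟨hc, hd⟩, hdc, hcd⟩ := hx
      have hl32 : lam 3 ≤ lam 2 := hdec 2 3 (by omega) (by omega)
      have hl21 : lam 2 ≤ lam 1 := hdec 1 2 (by omega) (by omega)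
      have hclam : c ≤ lam 2 := by by_contra hcon; omega
      have hdlam : d ≤ lam 3 := by by_contra hcon; omega
      simp only [mem_filter, Fintype.mem_piFinset, mem_range]
      refine ⟨?_, ?_, ?_⟩
      · intro k
        fin_cases k <;> simp <;> omega
      · intro j k hjk
        fin_cases j <;> fin_cases k <;> simp_all [Fin.le_def] <;> omega
      · rw [Fin.sum_univ_four]
        simp
        omega
    · -- left inverse
      intro mu hmu
      funext k
      fin_cases k <;> simp
    · -- right inverse
      intro x hx
      obtain ⟨b, a, c, d⟩ := x
      simp
  rw [key, Finset.card_sigma]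
  refine Finset.sum_congr rfl (fun b _ => ?_)
  rw [Finset.card_sigma]
  exact Finset.sum_congr rfl (fun a _ => pair_card b (s - a - b))

lemma telescope (A B s : ℕ) (hs : A + B + 1 ≤ s) (hBA : B ≤ A) :
    (((∑ b ∈ range (B+1), ∑ a ∈ Finset.Ico b (A+1), ww b (s + 1 - a - b) : ℕ) : ℤ)
      - ((∑ b ∈ range (B+1), ∑ a ∈ Finset.Ico b (A+1), ww b (s - a - b) : ℕ) : ℤ))
    = ∑ b ∈ range (B+1), ((ww b (s + 1 - 2*b) : ℤ) - (ww b (s - A - b) : ℤ)) := by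
  push_cast
  rw [← Finset.sum_sub_distrib]
  refine Finset.sum_congr rfl (fun b hb => ?_)
  rw [mem_range] at hb
  have h1 : ∑ a ∈ Finset.Ico b (A+1), (ww b (s - a - b) : ℤ)
      = ∑ a ∈ Finset.Ico (b+1) (A+2), (ww b (s + 1 - a - b) : ℤ) := by
    rw [Finset.sum_Ico_eq_sum_range, Finset.sum_Ico_eq_sum_range]
    have hc : A + 2 - (b+1) = A + 1 - b := by omega
    rw [hc]
    refine Finset.sum_congr rfl (fun i _ => ?_)
    have harg : s - (b + i) - b = s + 1 - (b + 1 + i) - b := by omega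
    rw [harg]
  rw [h1]
  have h2 : ∑ a ∈ Finset.Ico b (A+2), (ww b (s + 1 - a - b) : ℤ)
      = ∑ a ∈ Finset.Ico b (A+1), (ww b (s + 1 - a - b) : ℤ) + ww b (s + 1 - (A+1) - b) := by
    rw [Finset.sum_Ico_succ_top (by omega)]
  have h3 : ∑ a ∈ Finset.Ico b (A+2), (ww b (s + 1 - a - b) : ℤ)
      = (ww b (s + 1 - b - b) : ℤ) + ∑ a ∈ Finset.Ico (b+1) (A+2), (ww b (s + 1 - a - b) : ℤ) := by
    rw [Finset.sum_eq_sum_Ico_succ_bot (by omega)]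
  have harg1 : s + 1 - b - b = s + 1 - 2*b := by omega
  have harg2 : s + 1 - (A+1) - b = s - A - b := by omega
  rw [harg1] at h3
  rw [harg2] at h2
  omega


lemma notUnimodal (a : ℕ → ℕ) (N : ℕ) (h1 : a (N+1) < a N) (h2 : a (N+1) < a (N+2)) :
    ¬ IsUnimodal a := by
  rintro ⟨mm, hinc, hdecr⟩
  rcases le_or_gt mm (N+1) with h | h
  · exact absurd (hdecr (N+1) (N+2) h (by omega)) (by omega)
  · exact absurd (hinc N (N+1) (by omega) (by omega)) (by omega)


lemma construction (K : ℕ) (hK : 49 ≤ K) :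
    ∃ e : ℕ, 1 ≤ e ∧ 25*K < e ∧ e ≤ 26*K ∧
      24009*(K*K) + 16015*K + 6 < 36*(e*e) ∧
      36*((e-1)*(e-1)) ≤ 24009*(K*K) + 16015*K + 6 := by
  have hex : ∃ e, 24009*(K*K) + 16015*K + 6 < 36*(e*e) := by
    refine ⟨24009*(K*K) + 16015*K + 6 + 1, ?_⟩
    have h1 : 24009*(K*K) + 16015*K + 6 + 1 ≤ (24009*(K*K) + 16015*K + 6 + 1)*(24009*(K*K) + 16015*K + 6 + 1) :=
      Nat.le_mul_of_pos_left _ (by positivity)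
    omega
  refine ⟨Nat.find hex, ?_, ?_, ?_, Nat.find_spec hex, ?_⟩
  · rcases Nat.eq_zero_or_pos (Nat.find hex) with h | h
    · have := Nat.find_spec hex
      rw [h] at this
      omega
    · omega
  · by_contra hcon
    push_neg at hcon
    have he := Nat.find_spec hex
    have hsq : (Nat.find hex) * (Nat.find hex) ≤ (25*K)*(25*K) :=
      Nat.mul_le_mul hcon hcon
    have hring : (25*K)*(25*K) = 625*(K*K) := by ring
    omega
  · by_contra hcon
    push_neg at hcon
    have hmin : ¬ (24009*(K*K) + 16015*K + 6 < 36*((Nat.find hex - 1)*(Nat.find hex - 1))) :=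
      Nat.find_min hex (by omega)
    have hsq : (26*K)*(26*K) ≤ (Nat.find hex - 1)*(Nat.find hex - 1) :=
      Nat.mul_le_mul (by omega) (by omega)
    have hring : (26*K)*(26*K) = 676*(K*K) := by ring
    have haux : 49*K ≤ K*K := Nat.mul_le_mul_right K hK
    omega
  · rcases Nat.eq_zero_or_pos (Nat.find hex) with h | h
    · have := Nat.find_spec hex
      rw [h] at this
      omega
    · have hmin := Nat.find_min hex (show Nat.find hex - 1 < Nat.find hex by omega)
      omega

lemma part2main (m n ℓ N : ℕ) (lam : ℕ → ℕ)
    (hdec : ∀ i j, i ≤ j → j < 4 → lam j ≤ lam i)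
    (h0 : lam 0 + 1 = 12 * m) (h1 : lam 1 + 1 = 12 * n)
    (h10 : 10 * lam 3 > 9 * lam 0)
    (c1 : 1999 * m < 1000 * ℓ) (c2 : 10000 * ℓ < 19999 * m)
    (c3 : 98 * m < 100 * n) (c4 : n + m < ℓ)
    (hN : N + 12 = 12 * ℓ)
    (hN14 : lam 0 + lam 1 + 14 ≤ N) (hNlt : N < 2 * lam 0 + 2) :
    ((subCount 4 lam (N + 1) : ℤ) - (subCount 4 lam N : ℤ)
        = 9 * (ℓ : ℤ) ^ 2 - (48 * (m : ℤ) + 15) * ℓ + 24 * (m : ℤ) ^ 2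
          + 72 * (m : ℤ) * n - 36 * (n : ℤ) ^ 2 + 38 * m + 6) ∧
    ((subCount 4 lam (N + 2) : ℤ) - (subCount 4 lam (N + 1) : ℤ)
        = 9 * (ℓ : ℤ) ^ 2 - (48 * (m : ℤ) + 15) * ℓ + 24 * (m : ℤ) ^ 2
          + 72 * (m : ℤ) * n - 36 * (n : ℤ) ^ 2 + 34 * m + 6 * n + 6) := by
  have hBA : lam 1 ≤ lam 0 := hdec 0 1 (by omega) (by omega)
  have hml : m + n + 2 ≤ ℓ := by omega
  have hl2m : ℓ ≤ 2*m := by omega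
  obtain ⟨r, hrr⟩ : ∃ r, ℓ = m + r := ⟨ℓ - m, by omega⟩
  obtain ⟨J, hJ⟩ : ∃ J, 12*n + 3 = 4*ℓ + J := ⟨12*n + 3 - 4*ℓ, by omega⟩
  obtain ⟨c, hc⟩ : ∃ c, 2*ℓ = J + c + 1 := ⟨2*ℓ - J - 1, by omega⟩
  obtain ⟨c', hc'⟩ : ∃ c', 2*ℓ = J + c' := ⟨2*ℓ - J, by omega⟩
  obtain ⟨a, ha⟩ : ∃ a, 12*r = 12*n + a + 10 := ⟨12*r - 12*n - 10, by omega⟩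
  obtain ⟨a', ha'⟩ : ∃ a', 12*r = 12*n + a' + 9 := ⟨12*r - 12*n - 9, by omega⟩
  obtain ⟨J2, hJ2⟩ : ∃ J2, 12*n + 5 = 6*r + J2 := ⟨12*n + 5 - 6*r, by omega⟩
  obtain ⟨J2', hJ2'⟩ : ∃ J2', 12*n + 4 = 6*r + J2' := ⟨12*n + 4 - 6*r, by omega⟩
  have h2 : 12*n + 24 ≤ 6*ℓ := by omega
  have hr6 : 6*r ≤ 12*n + 5 := by omega
  have hrn : n + 2 ≤ r := by omega
  have hc0 := count_eq lam N hdec (by omega) (by omega)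
  have hc1 := count_eq lam (N+1) hdec (by omega) (by omega)
  have hc2 := count_eq lam (N+2) hdec (by omega) (by omega)
  have ht1 := telescope (lam 0) (lam 1) N (by omega) hBA
  have ht2 := telescope (lam 0) (lam 1) (N+1) (by omega) hBA
  have hB12 : lam 1 + 1 = 12*n := h1
  constructor
  · rw [hc1, hc0, ht1, hB12, Finset.sum_sub_distrib]
    have hA : ∑ b ∈ range (12*n), (ww b (N + 1 - 2*b) : ℤ)
        = ∑ b ∈ range (12*n), (ww b (12*ℓ - 11 - 2*b) : ℤ) := by
      refine Finset.sum_congr rfl (fun b _ => ?_)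
      rw [show N + 1 - 2*b = 12*ℓ - 11 - 2*b from by omega]
    have hB : ∑ b ∈ range (12*n), (ww b (N - lam 0 - b) : ℤ)
        = ∑ b ∈ range (12*n), (ww b (12*r - 11 - b) : ℤ) := by
      refine Finset.sum_congr rfl (fun b _ => ?_)
      rw [show N - lam 0 - b = 12*r - 11 - b from by omega]
    rw [hA, hB]
    have E1 := S1odd_eval n ℓ J c hJ hc h2
    have E2 := S2odd_eval r n a J2 hrn hr6 ha hJ2
    have hrz : (r:ℤ) = (ℓ:ℤ) - (m:ℤ) := by omega
    rw [hrz] at E2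
    have g4 : 4 * ((∑ b ∈ range (12*n), (ww b (12*ℓ - 11 - 2*b) : ℤ))
        - ∑ b ∈ range (12*n), (ww b (12*r - 11 - b) : ℤ))
        = 4 * (9 * (ℓ : ℤ) ^ 2 - (48 * (m : ℤ) + 15) * ℓ + 24 * (m : ℤ) ^ 2
          + 72 * (m : ℤ) * n - 36 * (n : ℤ) ^ 2 + 38 * m + 6) := by
      linear_combination E1 - E2
    linarith [g4]
  · rw [hc2, hc1, ht2, hB12, Finset.sum_sub_distrib]
    have hA : ∑ b ∈ range (12*n), (ww b (N + 1 + 1 - 2*b) : ℤ)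
        = ∑ b ∈ range (12*n), (ww b (12*ℓ - 10 - 2*b) : ℤ) := by
      refine Finset.sum_congr rfl (fun b _ => ?_)
      rw [show N + 1 + 1 - 2*b = 12*ℓ - 10 - 2*b from by omega]
    have hB : ∑ b ∈ range (12*n), (ww b (N + 1 - lam 0 - b) : ℤ)
        = ∑ b ∈ range (12*n), (ww b (12*r - 10 - b) : ℤ) := by
      refine Finset.sum_congr rfl (fun b _ => ?_)
      rw [show N + 1 - lam 0 - b = 12*r - 10 - b from by omega]
    rw [hA, hB]
    have E1 := S1even_eval n ℓ J c' hJ hc' h2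
    have E2 := S2even_eval r n a' J2' hrn hr6 ha' hJ2'
    have hrz : (r:ℤ) = (ℓ:ℤ) - (m:ℤ) := by omega
    rw [hrz] at E2
    have g4 : 4 * ((∑ b ∈ range (12*n), (ww b (12*ℓ - 10 - 2*b) : ℤ))
        - ∑ b ∈ range (12*n), (ww b (12*r - 10 - b) : ℤ))
        = 4 * (9 * (ℓ : ℤ) ^ 2 - (48 * (m : ℤ) + 15) * ℓ + 24 * (m : ℤ) ^ 2
          + 72 * (m : ℤ) * n - 36 * (n : ℤ) ^ 2 + 34 * m + 6 * n + 6) := by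
      linear_combination E1 - E2
    linarith [g4]

/-- There are infinitely many partitions `λ` with 4 (positive) parts whose rank
generating function `G_λ` is not unimodal.  In fact, for `m` sufficiently large, if
`λ = (12m-1, 12n-1, λ₃, λ₄)` is a partition with `λ₄ > 0.9·λ₁`,
`1.999m < ℓ < 1.9999m`, `0.98m < n < ℓ - m`, and `N = 12(ℓ-1)` satisfies
`λ₁ + λ₂ + 14 ≤ N < 2λ₁ + 2`, then the coefficients of `q^{N+1}` and `q^{N+2}` in
`(1-q)G_λ(q)` equal the stated quadratics in `m, n, ℓ`, and whenever the former is
negative and the latter positive, `G_λ` is not unimodal at `N+1`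
(i.e. `a_{N+1} < a_N` and `a_{N+1} < a_{N+2}`). -/
theorem stmt19 :
    (∀ M : ℕ, ∃ lam : ℕ → ℕ,
        (∀ i j, i ≤ j → j < 4 → lam j ≤ lam i) ∧ 0 < lam 3 ∧ M < lam 0 ∧
        ¬ IsUnimodal (subCount 4 lam)) ∧
    (∃ M0 : ℕ, ∀ m n ℓ N : ℕ, ∀ lam : ℕ → ℕ,
      M0 ≤ m →
      (∀ i j, i ≤ j → j < 4 → lam j ≤ lam i) →
      lam 0 + 1 = 12 * m → lam 1 + 1 = 12 * n →
      10 * lam 3 > 9 * lam 0 →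
      1999 * m < 1000 * ℓ → 10000 * ℓ < 19999 * m →
      98 * m < 100 * n → n + m < ℓ →
      N + 12 = 12 * ℓ →
      lam 0 + lam 1 + 14 ≤ N → N < 2 * lam 0 + 2 →
      ((subCount 4 lam (N + 1) : ℤ) - (subCount 4 lam N : ℤ)
          = 9 * (ℓ : ℤ) ^ 2 - (48 * (m : ℤ) + 15) * ℓ + 24 * (m : ℤ) ^ 2
            + 72 * (m : ℤ) * n - 36 * (n : ℤ) ^ 2 + 38 * m + 6) ∧
      ((subCount 4 lam (N + 2) : ℤ) - (subCount 4 lam (N + 1) : ℤ)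
          = 9 * (ℓ : ℤ) ^ 2 - (48 * (m : ℤ) + 15) * ℓ + 24 * (m : ℤ) ^ 2
            + 72 * (m : ℤ) * n - 36 * (n : ℤ) ^ 2 + 34 * m + 6 * n + 6) ∧
      ((subCount 4 lam (N + 1) : ℤ) - (subCount 4 lam N : ℤ) < 0 →
        0 < (subCount 4 lam (N + 2) : ℤ) - (subCount 4 lam (N + 1) : ℤ) →
        subCount 4 lam (N + 1) < subCount 4 lam N ∧
          subCount 4 lam (N + 1) < subCount 4 lam (N + 2))) := by
  constructor
  · -- Part 1: infinitely many non-unimodal examples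
    intro M
    set K := M + 1000 with hKdef
    have hK : 49 ≤ K := by omega
    obtain ⟨e, he1, helow, hehigh, hespec, hemin⟩ := construction K hK
    set lam : ℕ → ℕ :=
      fun i => if i = 0 then 24000*K - 1 else if i = 1 then 12*(2000*K - e) - 1 else 22000*K
      with hlam
    have hl0 : lam 0 = 24000*K - 1 := if_pos rfl
    have hl1 : lam 1 = 12*(2000*K - e) - 1 := by simp [hlam]
    have hl2 : lam 2 = 22000*K := by simp [hlam]
    have hl3 : lam 3 = 22000*K := by simp [hlam]
    have hdec : ∀ i j, i ≤ j → j < 4 → lam j ≤ lam i := by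
      intro i j hij hj
      interval_cases j <;> interval_cases i <;>
        simp only [hl0, hl1, hl2, hl3] <;> omega
    refine ⟨lam, hdec, by rw [hl3]; omega, by rw [hl0]; omega, ?_⟩
    obtain ⟨E1, E2⟩ := part2main (2000*K) (2000*K - e) (3999*K) (47988*K - 12) lam hdec
      (by rw [hl0]; omega) (by rw [hl1]; omega) (by rw [hl3, hl0]; omega)
      (by clear_value lam K; clear hespec hemin; omega) (by clear_value lam K; clear hespec hemin; omega) (by clear_value lam K; clear hespec hemin; omega)
      (by clear_value lam K; clear hespec hemin; omega) (by omega)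
      (by rw [hl0, hl1]; omega) (by rw [hl0]; omega)
    have hncast : ((2000*K - e : ℕ) : ℤ) = 2000*(K:ℤ) - (e:ℤ) := by omega
    have hXe : (24009*((K:ℤ)*(K:ℤ)) + 16015*(K:ℤ) + 6) < 36*((e:ℤ)*(e:ℤ)) := by
      exact_mod_cast hespec
    have hXm : 36*(((e:ℤ)-1)*((e:ℤ)-1)) ≤ 24009*((K:ℤ)*(K:ℤ)) + 16015*(K:ℤ) + 6 := by
      have h' := hemin
      zify at h'
      rwa [show ((e - 1 : ℕ) : ℤ) = (e:ℤ) - 1 from by omega] at h'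
    have heq1 : 9 * ((3999*K : ℕ) : ℤ) ^ 2 - (48 * ((2000*K : ℕ) : ℤ) + 15) * ((3999*K : ℕ) : ℤ)
          + 24 * ((2000*K : ℕ) : ℤ) ^ 2 + 72 * ((2000*K : ℕ) : ℤ) * ((2000*K - e : ℕ) : ℤ)
          - 36 * ((2000*K - e : ℕ) : ℤ) ^ 2 + 38 * ((2000*K : ℕ) : ℤ) + 6
        = 24009*((K:ℤ)*(K:ℤ)) + 16015*(K:ℤ) + 6 - 36*((e:ℤ)*(e:ℤ)) := by
      rw [hncast]
      push_cast
      ring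
    have heq2 : 9 * ((3999*K : ℕ) : ℤ) ^ 2 - (48 * ((2000*K : ℕ) : ℤ) + 15) * ((3999*K : ℕ) : ℤ)
          + 24 * ((2000*K : ℕ) : ℤ) ^ 2 + 72 * ((2000*K : ℕ) : ℤ) * ((2000*K - e : ℕ) : ℤ)
          - 36 * ((2000*K - e : ℕ) : ℤ) ^ 2 + 34 * ((2000*K : ℕ) : ℤ) + 6 * ((2000*K - e : ℕ) : ℤ) + 6
        = 24009*((K:ℤ)*(K:ℤ)) + 16015*(K:ℤ) + 6 - 36*((e:ℤ)*(e:ℤ)) + 4000*(K:ℤ) - 6*(e:ℤ) := by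
      rw [hncast]
      push_cast
      ring
    rw [heq1] at E1
    rw [heq2] at E2
    have hexp : 36*(((e:ℤ)-1)*((e:ℤ)-1)) = 36*((e:ℤ)*(e:ℤ)) - 72*(e:ℤ) + 36 := by ring
    have hehighZ : (e:ℤ) ≤ 26*(K:ℤ) := by exact_mod_cast hehigh
    have hKZ : (49:ℤ) ≤ (K:ℤ) := by exact_mod_cast hK
    have hd1 : (subCount 4 lam (47988*K - 12 + 1) : ℤ) - (subCount 4 lam (47988*K - 12) : ℤ) < 0 := by
      rw [E1]; linarith
    have hd2 : 0 < (subCount 4 lam (47988*K - 12 + 2) : ℤ)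
        - (subCount 4 lam (47988*K - 12 + 1) : ℤ) := by
      rw [E2]; linarith
    exact notUnimodal (subCount 4 lam) (47988*K - 12) (by omega) (by omega)
  · -- Part 2
    refine ⟨1000, fun m n ℓ N lam hm hdec h0 h1 h10 c1 c2 c3 c4 hN hN14 hNlt => ?_⟩
    obtain ⟨E1, E2⟩ := part2main m n ℓ N lam hdec h0 h1 h10 c1 c2 c3 c4 hN hN14 hNlt
    exact ⟨E1, E2, fun hneg hpos => ⟨by omega, by omega⟩⟩
end
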